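/- arXiv:0803.2769 — 9 statements merged into one kernel-verified Lean document; each statement's English description precedes it below -/
import Mathlib

section
/- Let A be a commutative ring and let B : A → A → A be a map that is additive in each argument, antisymmetric (B a b = −B b a for all a, b), and satisfies the Leibniz rule B a (b·c) = (B a b)·c + b·(B a c) for all a, b, c ∈ A. Let S ⊆ A be a subset and let J be the ideal of A generated by S. If B s t ∈ J for all s, t ∈ S, then B a b ∈ J for all a, b ∈ J. (Stability of an ideal under a Poisson-type bracket can be checked on any system of generators.) -/
/-- Stability of an ideal under a Poisson-type bracket can be checked on any
system of generators. -/
theorem stmt_0 {A : Type*} [CommRing A] (B : A → A → A)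
    (hB_addl : ∀ a b c : A, B (a + b) c = B a c + B b c)
    (hB_addr : ∀ a b c : A, B a (b + c) = B a b + B a c)
    (hB_anti : ∀ a b : A, B a b = - B b a)
    (hB_leib : ∀ a b c : A, B a (b * c) = B a b * c + b * B a c)
    (S : Set A) (J : Ideal A) (hJ : J = Ideal.span S)
    (hS : ∀ s ∈ S, ∀ t ∈ S, B s t ∈ J) :
    ∀ a ∈ J, ∀ b ∈ J, B a b ∈ J := by
  have hzero_r : ∀ a : A, B a 0 = 0 := by
    intro a
    have := hB_addr a 0 0
    simpa using this.symm
  have hzero_l : ∀ a : A, B 0 a = 0 := by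
    intro a
    rw [hB_anti, hzero_r, neg_zero]
  -- Step 1: for s ∈ S, B s b ∈ J for all b ∈ J
  have step1 : ∀ s ∈ S, ∀ b ∈ J, B s b ∈ J := by
    intro s hs b hb
    rw [hJ] at hb
    have : b ∈ Ideal.span S ∧ B s b ∈ J := by
      refine Submodule.span_induction (fun t ht => ⟨Ideal.subset_span ht, hS s hs t ht⟩)
        ⟨zero_mem _, by rw [hzero_r]; exact zero_mem _⟩
        (fun x y _ _ hx hy => ⟨add_mem hx.1 hy.1, by rw [hB_addr]; exact add_mem hx.2 hy.2⟩)
        (fun c x _ hx => ?_) hb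
      refine ⟨Submodule.smul_mem _ _ hx.1, ?_⟩
      have : B s (c * x) = B s c * x + c * B s x := hB_leib s c x
      rw [smul_eq_mul, this]
      exact add_mem (Ideal.mul_mem_left _ _ (by rw [hJ]; exact hx.1))
        (Ideal.mul_mem_left _ _ hx.2)
    exact this.2
  -- Step 2: general a ∈ J
  intro a ha
  rw [hJ] at ha
  have : a ∈ Ideal.span S ∧ ∀ b ∈ J, B a b ∈ J := by
    refine Submodule.span_induction (fun t ht => ⟨Ideal.subset_span ht, step1 t ht⟩)
      ⟨zero_mem _, fun b _ => by rw [hzero_l]; exact zero_mem _⟩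
      (fun x y _ _ hx hy => ⟨add_mem hx.1 hy.1,
        fun b hb => by rw [hB_addl]; exact add_mem (hx.2 b hb) (hy.2 b hb)⟩)
      (fun c x _ hx => ?_) ha
    refine ⟨Submodule.smul_mem _ _ hx.1, fun b hb => ?_⟩
    have hxJ : x ∈ J := by rw [hJ]; exact hx.1
    rw [smul_eq_mul, hB_anti, hB_leib]
    refine neg_mem (add_mem (Ideal.mul_mem_left _ _ hxJ) (Ideal.mul_mem_left _ _ ?_))
    rw [hB_anti]; exact neg_mem (hx.2 b hb)
  exact this.2
end

section
/- Let A be a commutative ℂ-algebra and let D := Derivation ℂ A A, with its A-module structure and the commutator Lie bracket ⁅X,Y⁆ = X∘Y − Y∘X. Let ∘ : D → D → D be an A-bilinear, commutative, associative multiplication. Define P X Y Z := ⁅X, Y∘Z⁆ − ⁅X,Y⁆∘Z − Y∘⁅X,Z⁆ and E X Y Z W := P (X∘Y) Z W − X∘(P Y Z W) − Y∘(P X Z W). Then E is A-polylinear: for every f ∈ A and all X, Y, Z, W ∈ D, E (f•X) Y Z W = f•(E X Y Z W), E X (f•Y) Z W = f•(E X Y Z W), E X Y (f•Z) W = f•(E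 X Y Z W), and E X Y Z (f•W) = f•(E X Y Z W). -/
/-- The expression `E` measuring the failure of the F-manifold structure identity
for a commutative associative `A`-bilinear multiplication on derivations is
`A`-polylinear in all four arguments. -/
theorem stmt_2 {A : Type*} [CommRing A] [Algebra ℂ A]
    (mul : Derivation ℂ A A → Derivation ℂ A A → Derivation ℂ A A)
    (h_addl : ∀ X Y Z : Derivation ℂ A A, mul (X + Y) Z = mul X Z + mul Y Z)
    (h_addr : ∀ X Y Z : Derivation ℂ A A, mul X (Y + Z) = mul X Y + mul X Z)
    (h_smull : ∀ (f : A) (X Y : Derivation ℂ A A), mul (f • X) Y = f • mul X Y)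
    (h_smulr : ∀ (f : A) (X Y : Derivation ℂ A A), mul X (f • Y) = f • mul X Y)
    (h_comm : ∀ X Y : Derivation ℂ A A, mul X Y = mul Y X)
    (h_assoc : ∀ X Y Z : Derivation ℂ A A, mul (mul X Y) Z = mul X (mul Y Z))
    (P : Derivation ℂ A A → Derivation ℂ A A → Derivation ℂ A A → Derivation ℂ A A)
    (hP : ∀ X Y Z : Derivation ℂ A A,
      P X Y Z = ⁅X, mul Y Z⁆ - mul ⁅X, Y⁆ Z - mul Y ⁅X, Z⁆)
    (E : Derivation ℂ A A → Derivation ℂ A A → Derivation ℂ A A → Derivation ℂ A A →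
      Derivation ℂ A A)
    (hE : ∀ X Y Z W : Derivation ℂ A A,
      E X Y Z W = P (mul X Y) Z W - mul X (P Y Z W) - mul Y (P X Z W)) :
    ∀ (f : A) (X Y Z W : Derivation ℂ A A),
      E (f • X) Y Z W = f • E X Y Z W ∧
      E X (f • Y) Z W = f • E X Y Z W ∧
      E X Y (f • Z) W = f • E X Y Z W ∧
      E X Y Z (f • W) = f • E X Y Z W := by
  intro f X Y Z W
  -- bracket Leibniz rules
  have lbr : ∀ (f : A) (X Y : Derivation ℂ A A), ⁅X, f • Y⁆ = f • ⁅X, Y⁆ + X f • Y := by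
    intro f X Y; ext a; simp [Derivation.commutator_apply]
  have lbl : ∀ (f : A) (X Y : Derivation ℂ A A), ⁅f • X, Y⁆ = f • ⁅X, Y⁆ - Y f • X := by
    intro f X Y; ext a; simp [Derivation.commutator_apply]; ring
  -- mul distributes over subtraction
  have h_subr : ∀ X Y Z : Derivation ℂ A A, mul X (Y - Z) = mul X Y - mul X Z := by
    intro X Y Z
    have h := h_addr X (Y - Z) Z
    rw [sub_add_cancel] at h
    rw [eq_sub_iff_add_eq, ← h]
  -- P is A-linear in its second argument
  have P2 : ∀ (f : A) (X Y Z : Derivation ℂ A A), P X (f • Y) Z = f • P X Y Z := by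
    intro f X Y Z
    rw [hP, hP, h_smull, lbr, lbr, h_addl, h_smull, h_smull, h_smull]
    module
  -- P is A-linear in its third argument
  have P3 : ∀ (f : A) (X Y Z : Derivation ℂ A A), P X Y (f • Z) = f • P X Y Z := by
    intro f X Y Z
    rw [hP, hP, h_smulr, lbr, lbr, h_smulr, h_addr, h_smulr, h_smulr]
    module
  -- behaviour of P under scaling the first argument
  have P1 : ∀ (f : A) (X Y Z : Derivation ℂ A A),
      P (f • X) Y Z = f • P X Y Z - (mul Y Z) f • X + Y f • mul X Z + Z f • mul X Y := by
    intro f X Y Z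
    have h_subl : ∀ X Y Z : Derivation ℂ A A, mul (X - Y) Z = mul X Z - mul Y Z := by
      intro X Y Z
      rw [h_comm, h_subr, h_comm Z X, h_comm Z Y]
    rw [hP, hP, lbl, lbl, lbl, h_subl, h_subr, h_smull, h_smull, h_smulr, h_smulr,
      h_comm Y X]
    module
  have Esymm : ∀ X Y Z W : Derivation ℂ A A, E X Y Z W = E Y X Z W := by
    intro X Y Z W
    rw [hE, hE, h_comm]
    abel
  have Ex : ∀ (f : A) (X Y Z W : Derivation ℂ A A), E (f • X) Y Z W = f • E X Y Z W := by
    intro f X Y Z W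
    have e1 : mul (mul X Y) W = mul Y (mul X W) := by rw [h_comm X Y, h_assoc]
    have e2 : mul (mul X Y) Z = mul Y (mul X Z) := by rw [h_comm X Y, h_assoc]
    rw [hE, hE, h_smull, P1, P1, h_smull, h_addr, h_addr, h_subr, h_smulr,
      h_smulr, h_smulr, h_smulr, h_comm Y X, e1, e2]
    module
  refine ⟨Ex f X Y Z W, ?_, ?_, ?_⟩
  · rw [Esymm X (f • Y), Ex, Esymm]
  · rw [hE, hE, P2, P2, P2, h_smulr, h_smulr]
    module
  · rw [hE, hE, P3, P3, P3, h_smulr, h_smulr]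
    module
end

section
/- (Theorem 2.5, coordinate version.) The multiplication m satisfies the F-manifold structure identity P(m(X,Y); Z, U) = m(X, P(Y; Z, U)) + m(Y, P(X; Z, U)) for all vector fields X, Y, Z, U if and only if the ideal J(m) is Poisson-stable, i.e. {a,b} ∈ J(m) for all a, b ∈ J(m). -/
open MvPolynomial

/-- The canonical Poisson bracket on functions on the cotangent bundle of `ℂⁿ`:
`{f,g} = Σᵢ (∂f/∂yᵢ · ∂g/∂tᵢ − ∂f/∂tᵢ · ∂g/∂yᵢ)`, where `tᵢ` is the variable
indexed by `Sum.inl i` and `yᵢ` the one indexed by `Sum.inr i`. -/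
noncomputable def pb (n : ℕ) (f g : MvPolynomial (Fin n ⊕ Fin n) ℂ) :
    MvPolynomial (Fin n ⊕ Fin n) ℂ :=
  ∑ i : Fin n,
    (pderiv (Sum.inr i) f * pderiv (Sum.inl i) g -
     pderiv (Sum.inl i) f * pderiv (Sum.inr i) g)

/-- The embedding `φ : R → S` renaming each variable `i` to `Sum.inl i`. -/
noncomputable def phi (n : ℕ) :
    MvPolynomial (Fin n) ℂ →ₐ[ℂ] MvPolynomial (Fin n ⊕ Fin n) ℂ :=
  rename Sum.inl

/-- The fiberwise-linear function `ι(X) = Σᵢ φ(Xᵢ)·yᵢ` associated to a vector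
field `X : Fin n → R`. -/
noncomputable def iota (n : ℕ) (Xf : Fin n → MvPolynomial (Fin n) ℂ) :
    MvPolynomial (Fin n ⊕ Fin n) ℂ :=
  ∑ i : Fin n, phi n (Xf i) * MvPolynomial.X (Sum.inr i)

/-- The Lie bracket of vector fields: `[X,Y]ᵢ = Σⱼ (Xⱼ·∂Yᵢ/∂tⱼ − Yⱼ·∂Xᵢ/∂tⱼ)`. -/
noncomputable def lieVF (n : ℕ) (Xf Yf : Fin n → MvPolynomial (Fin n) ℂ) :
    Fin n → MvPolynomial (Fin n) ℂ :=
  fun i => ∑ j : Fin n, (Xf j * pderiv j (Yf i) - Yf j * pderiv j (Xf i))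

/-! ### Auxiliary lemmas -/

section AuxLemmas

variable {n : ℕ}

private lemma pderiv_inr_phi (j : Fin n) (f : MvPolynomial (Fin n) ℂ) :
    pderiv (Sum.inr j) (phi n f) = 0 := by
  induction f using MvPolynomial.induction_on with
  | C a => simp [phi]
  | add p q hp hq => simp [map_add, hp, hq]
  | mul_X p i hp => simp [phi, map_mul, pderiv_mul, hp] at hp ⊢

private lemma pderiv_inl_phi (j : Fin n) (f : MvPolynomial (Fin n) ℂ) :
    pderiv (Sum.inl j) (phi n f) = phi n (pderiv j f) :=
  pderiv_rename Sum.inl_injective j f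

private lemma pb_add_left (f g h : MvPolynomial (Fin n ⊕ Fin n) ℂ) :
    pb n (f + g) h = pb n f h + pb n g h := by
  unfold pb; rw [← Finset.sum_add_distrib]
  exact Finset.sum_congr rfl fun i _ => by rw [map_add, map_add]; ring

private lemma pb_add_right (f g h : MvPolynomial (Fin n ⊕ Fin n) ℂ) :
    pb n f (g + h) = pb n f g + pb n f h := by
  unfold pb; rw [← Finset.sum_add_distrib]
  exact Finset.sum_congr rfl fun i _ => by rw [map_add, map_add]; ring

private lemma pb_sub_left (f g h : MvPolynomial (Fin n ⊕ Fin n) ℂ) :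
    pb n (f - g) h = pb n f h - pb n g h := by
  unfold pb; rw [← Finset.sum_sub_distrib]
  exact Finset.sum_congr rfl fun i _ => by rw [map_sub, map_sub]; ring

private lemma pb_sub_right (f g h : MvPolynomial (Fin n ⊕ Fin n) ℂ) :
    pb n f (g - h) = pb n f g - pb n f h := by
  unfold pb; rw [← Finset.sum_sub_distrib]
  exact Finset.sum_congr rfl fun i _ => by rw [map_sub, map_sub]; ring

private lemma pb_mul_left (f g h : MvPolynomial (Fin n ⊕ Fin n) ℂ) :
    pb n (f * g) h = f * pb n g h + g * pb n f h := by
  unfold pb; rw [Finset.mul_sum, Finset.mul_sum, ← Finset.sum_add_distrib]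
  exact Finset.sum_congr rfl fun i _ => by simp only [pderiv_mul]; ring

private lemma pb_mul_right (f g h : MvPolynomial (Fin n ⊕ Fin n) ℂ) :
    pb n f (g * h) = g * pb n f h + h * pb n f g := by
  unfold pb; rw [Finset.mul_sum, Finset.mul_sum, ← Finset.sum_add_distrib]
  exact Finset.sum_congr rfl fun i _ => by simp only [pderiv_mul]; ring

private lemma pb_zero_right (f : MvPolynomial (Fin n ⊕ Fin n) ℂ) : pb n f 0 = 0 := by
  simp [pb]

private lemma pb_one_right (f : MvPolynomial (Fin n ⊕ Fin n) ℂ) : pb n f 1 = 0 := by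
  simp [pb, pderiv_one]

private lemma pb_antisymm (f g : MvPolynomial (Fin n ⊕ Fin n) ℂ) : pb n f g = -pb n g f := by
  unfold pb; rw [← Finset.sum_neg_distrib]
  exact Finset.sum_congr rfl fun i _ => by ring

private lemma pb_zero_left (f : MvPolynomial (Fin n ⊕ Fin n) ℂ) : pb n 0 f = 0 := by
  rw [pb_antisymm, pb_zero_right, neg_zero]

private lemma pb_one_left (f : MvPolynomial (Fin n ⊕ Fin n) ℂ) : pb n 1 f = 0 := by
  rw [pb_antisymm, pb_one_right, neg_zero]

private lemma iota_add (X Y : Fin n → MvPolynomial (Fin n) ℂ) :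
    iota n (X + Y) = iota n X + iota n Y := by
  unfold iota; rw [← Finset.sum_add_distrib]
  exact Finset.sum_congr rfl fun i _ => by rw [Pi.add_apply, map_add]; ring

private lemma iota_zero : iota n 0 = 0 := by simp [iota]

private lemma iota_neg (X : Fin n → MvPolynomial (Fin n) ℂ) : iota n (-X) = -iota n X := by
  unfold iota; rw [← Finset.sum_neg_distrib]
  exact Finset.sum_congr rfl fun i _ => by rw [Pi.neg_apply, map_neg]; ring

private lemma iota_sub (X Y : Fin n → MvPolynomial (Fin n) ℂ) :
    iota n (X - Y) = iota n X - iota n Y := by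
  rw [sub_eq_add_neg, iota_add, iota_neg, sub_eq_add_neg]

private lemma iota_smul (f : MvPolynomial (Fin n) ℂ) (X : Fin n → MvPolynomial (Fin n) ℂ) :
    iota n (f • X) = phi n f * iota n X := by
  unfold iota; rw [Finset.mul_sum]
  exact Finset.sum_congr rfl fun i _ => by
    rw [Pi.smul_apply, smul_eq_mul, map_mul]; ring

private lemma iota_sum {α : Type*} (s : Finset α) (F : α → Fin n → MvPolynomial (Fin n) ℂ) :
    iota n (∑ a ∈ s, F a) = ∑ a ∈ s, iota n (F a) := by
  classical
  induction s using Finset.induction_on with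
  | empty => simp [iota_zero]
  | insert _ _ h ih => rw [Finset.sum_insert h, Finset.sum_insert h, iota_add, ih]

private lemma pderiv_inr_iota (j : Fin n) (Xf : Fin n → MvPolynomial (Fin n) ℂ) :
    pderiv (Sum.inr j) (iota n Xf) = phi n (Xf j) := by
  unfold iota
  rw [map_sum, Finset.sum_eq_single j]
  · rw [pderiv_mul, pderiv_inr_phi, pderiv_X_self, zero_mul, zero_add, mul_one]
  · intro i _ hij
    rw [pderiv_mul, pderiv_inr_phi, pderiv_X_of_ne (by simpa using hij), zero_mul, zero_add,
      mul_zero]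
  · intro h; exact absurd (Finset.mem_univ j) h

private lemma pderiv_inl_iota (j : Fin n) (Xf : Fin n → MvPolynomial (Fin n) ℂ) :
    pderiv (Sum.inl j) (iota n Xf) = iota n (fun i => pderiv j (Xf i)) := by
  unfold iota
  rw [map_sum]
  exact Finset.sum_congr rfl fun i _ => by
    rw [pderiv_mul, pderiv_inl_phi, pderiv_X_of_ne (by simp), mul_zero, add_zero]

private lemma pb_iota (X Y : Fin n → MvPolynomial (Fin n) ℂ) :
    pb n (iota n X) (iota n Y) = iota n (lieVF n X Y) := by
  unfold pb
  have step : ∀ j : Fin n,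
      pderiv (Sum.inr j) (iota n X) * pderiv (Sum.inl j) (iota n Y) -
        pderiv (Sum.inl j) (iota n X) * pderiv (Sum.inr j) (iota n Y) =
      iota n ((X j • fun i => pderiv j (Y i)) - (Y j • fun i => pderiv j (X i))) := by
    intro j
    rw [pderiv_inr_iota, pderiv_inl_iota, pderiv_inr_iota, pderiv_inl_iota,
      iota_sub, iota_smul, iota_smul]
    ring
  rw [Finset.sum_congr rfl fun j _ => step j, ← iota_sum]
  congr 1
  funext i
  simp [lieVF, Finset.sum_apply, Pi.smul_apply, smul_eq_mul]

private lemma stab_of_gens {G : Set (MvPolynomial (Fin n ⊕ Fin n) ℂ)}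
    (h : ∀ g ∈ G, ∀ g' ∈ G, pb n g g' ∈ Ideal.span G) :
    ∀ a ∈ Ideal.span G, ∀ b ∈ Ideal.span G, pb n a b ∈ Ideal.span G := by
  intro a ha b hb
  refine Submodule.span_induction₂
    (p := fun x y _ _ => pb n x y ∈ Ideal.span G) ?_ ?_ ?_ ?_ ?_ ?_ ?_ ha hb
  · exact fun x y hx hy => h x hx y hy
  · intro y _; rw [pb_zero_left]; exact zero_mem _
  · intro x _; rw [pb_zero_right]; exact zero_mem _
  · intro x y z _ _ _ h1 h2; rw [pb_add_left]; exact add_mem h1 h2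
  · intro x y z _ _ _ h1 h2; rw [pb_add_right]; exact add_mem h1 h2
  · intro r x y hx _ h1
    rw [smul_eq_mul, pb_mul_left]
    exact add_mem (Ideal.mul_mem_left _ r h1) (Ideal.mul_mem_right _ _ hx)
  · intro r x y _ hy h1
    rw [smul_eq_mul, pb_mul_right]
    exact add_mem (Ideal.mul_mem_left _ r h1) (Ideal.mul_mem_right _ _ hy)

end AuxLemmas

/-- The nine-term vector field appearing when reducing the Poisson bracket of
two quadratic generators modulo the ideal of the spectral cover. -/
noncomputable def bigQ (n : ℕ)
    (m : (Fin n → MvPolynomial (Fin n) ℂ) → (Fin n → MvPolynomial (Fin n) ℂ) →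
      (Fin n → MvPolynomial (Fin n) ℂ))
    (X Y Z U : Fin n → MvPolynomial (Fin n) ℂ) : Fin n → MvPolynomial (Fin n) ℂ :=
  m (m X Z) (lieVF n Y U) + m (m X U) (lieVF n Y Z) + m (m Y Z) (lieVF n X U) +
    m (m Y U) (lieVF n X Z) - m X (lieVF n Y (m Z U)) - m Y (lieVF n X (m Z U)) -
    m Z (lieVF n (m X Y) U) - m U (lieVF n (m X Y) Z) + lieVF n (m X Y) (m Z U)

section Reduction

variable {n : ℕ}

private lemma reduce_main
    (m : (Fin n → MvPolynomial (Fin n) ℂ) → (Fin n → MvPolynomial (Fin n) ℂ) →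
      (Fin n → MvPolynomial (Fin n) ℂ))
    (J : Ideal (MvPolynomial (Fin n ⊕ Fin n) ℂ))
    (hgen2 : ∀ A B, iota n A * iota n B - iota n (m A B) ∈ J)
    (X Y Z U : Fin n → MvPolynomial (Fin n) ℂ) :
    pb n (iota n X * iota n Y - iota n (m X Y))
        (iota n Z * iota n U - iota n (m Z U)) - iota n (bigQ n m X Y Z U) ∈ J := by
  have key : pb n (iota n X * iota n Y - iota n (m X Y))
        (iota n Z * iota n U - iota n (m Z U)) - iota n (bigQ n m X Y Z U) =
      ((iota n X * iota n Z - iota n (m X Z)) * iota n (lieVF n Y U)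
        + (iota n (m X Z) * iota n (lieVF n Y U) - iota n (m (m X Z) (lieVF n Y U))))
      + ((iota n X * iota n U - iota n (m X U)) * iota n (lieVF n Y Z)
        + (iota n (m X U) * iota n (lieVF n Y Z) - iota n (m (m X U) (lieVF n Y Z))))
      + ((iota n Y * iota n Z - iota n (m Y Z)) * iota n (lieVF n X U)
        + (iota n (m Y Z) * iota n (lieVF n X U) - iota n (m (m Y Z) (lieVF n X U))))
      + ((iota n Y * iota n U - iota n (m Y U)) * iota n (lieVF n X Z)
        + (iota n (m Y U) * iota n (lieVF n X Z) - iota n (m (m Y U) (lieVF n X Z))))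
      - (iota n X * iota n (lieVF n Y (m Z U)) - iota n (m X (lieVF n Y (m Z U))))
      - (iota n Y * iota n (lieVF n X (m Z U)) - iota n (m Y (lieVF n X (m Z U))))
      - (iota n Z * iota n (lieVF n (m X Y) U) - iota n (m Z (lieVF n (m X Y) U)))
      - (iota n U * iota n (lieVF n (m X Y) Z) - iota n (m U (lieVF n (m X Y) Z))) := by
    simp only [bigQ, pb_sub_left, pb_sub_right, pb_mul_left, pb_mul_right, pb_iota,
      iota_add, iota_sub]
    ring
  rw [key]
  refine sub_mem (sub_mem (sub_mem (sub_mem (add_mem (add_mem (add_mem ?_ ?_) ?_) ?_)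
    (hgen2 _ _)) (hgen2 _ _)) (hgen2 _ _)) (hgen2 _ _) <;>
    exact add_mem (Ideal.mul_mem_right _ _ (hgen2 _ _)) (hgen2 _ _)

private lemma reduce_e
    (m : (Fin n → MvPolynomial (Fin n) ℂ) → (Fin n → MvPolynomial (Fin n) ℂ) →
      (Fin n → MvPolynomial (Fin n) ℂ))
    (e : Fin n → MvPolynomial (Fin n) ℂ)
    (J : Ideal (MvPolynomial (Fin n ⊕ Fin n) ℂ))
    (hgen2 : ∀ A B, iota n A * iota n B - iota n (m A B) ∈ J)
    (Z U : Fin n → MvPolynomial (Fin n) ℂ) :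
    pb n (iota n e - 1) (iota n Z * iota n U - iota n (m Z U)) -
      iota n (m Z (lieVF n e U) + m U (lieVF n e Z) - lieVF n e (m Z U)) ∈ J := by
  have key : pb n (iota n e - 1) (iota n Z * iota n U - iota n (m Z U)) -
      iota n (m Z (lieVF n e U) + m U (lieVF n e Z) - lieVF n e (m Z U)) =
      (iota n Z * iota n (lieVF n e U) - iota n (m Z (lieVF n e U)))
      + (iota n U * iota n (lieVF n e Z) - iota n (m U (lieVF n e Z))) := by
    simp only [pb_sub_left, pb_sub_right, pb_mul_left, pb_mul_right, pb_iota,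
      pb_one_left, pb_one_right, iota_add, iota_sub]
    ring
  rw [key]
  exact add_mem (hgen2 _ _) (hgen2 _ _)

private lemma Q_eq
    (m : (Fin n → MvPolynomial (Fin n) ℂ) → (Fin n → MvPolynomial (Fin n) ℂ) →
      (Fin n → MvPolynomial (Fin n) ℂ))
    (hm_addr : ∀ X Y Z : Fin n → MvPolynomial (Fin n) ℂ, m X (Y + Z) = m X Y + m X Z)
    (hm_comm : ∀ X Y : Fin n → MvPolynomial (Fin n) ℂ, m X Y = m Y X)
    (hm_assoc : ∀ X Y Z : Fin n → MvPolynomial (Fin n) ℂ, m (m X Y) Z = m X (m Y Z))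
    (X Y Z U : Fin n → MvPolynomial (Fin n) ℂ) :
    bigQ n m X Y Z U =
      (lieVF n (m X Y) (m Z U) - m (lieVF n (m X Y) Z) U - m Z (lieVF n (m X Y) U))
        - (m X (lieVF n Y (m Z U) - m (lieVF n Y Z) U - m Z (lieVF n Y U))
           + m Y (lieVF n X (m Z U) - m (lieVF n X Z) U - m Z (lieVF n X U))) := by
  have m_zero : ∀ A : Fin n → MvPolynomial (Fin n) ℂ, m A 0 = 0 := by
    intro A
    have h := hm_addr A 0 0
    rw [add_zero] at h
    exact add_left_cancel (h.symm.trans (add_zero _).symm)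
  have m_neg : ∀ A B : Fin n → MvPolynomial (Fin n) ℂ, m A (-B) = -m A B := by
    intro A B
    have h : m A (-B) + m A B = 0 := by rw [← hm_addr, neg_add_cancel, m_zero]
    exact eq_neg_of_add_eq_zero_left h
  have m_sub : ∀ A B C : Fin n → MvPolynomial (Fin n) ℂ, m A (B - C) = m A B - m A C := by
    intro A B C
    rw [sub_eq_add_neg, hm_addr, m_neg, sub_eq_add_neg]
  unfold bigQ
  simp only [m_sub]
  rw [hm_assoc X Z (lieVF n Y U), hm_assoc X U (lieVF n Y Z),
    hm_assoc Y Z (lieVF n X U), hm_assoc Y U (lieVF n X Z),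
    hm_comm U (lieVF n Y Z), hm_comm U (lieVF n X Z), hm_comm U (lieVF n (m X Y) Z)]
  abel

end Reduction

/-- Type synonym carrier for the algebra of vector fields with multiplication `m`
and unit `e`, i.e. the coordinate ring of the spectral cover. -/
structure VA (n : ℕ)
    (m : (Fin n → MvPolynomial (Fin n) ℂ) → (Fin n → MvPolynomial (Fin n) ℂ) →
      (Fin n → MvPolynomial (Fin n) ℂ))
    (e : Fin n → MvPolynomial (Fin n) ℂ) : Type where
  un : Fin n → MvPolynomial (Fin n) ℂ

section Psi

variable {n : ℕ}
  {m : (Fin n → MvPolynomial (Fin n) ℂ) → (Fin n → MvPolynomial (Fin n) ℂ) →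
    (Fin n → MvPolynomial (Fin n) ℂ)}
  {e : Fin n → MvPolynomial (Fin n) ℂ}

private lemma VA.ext' {a b : VA n m e} (h : a.un = b.un) : a = b := by
  cases a; cases b; cases h; rfl

/-- The commutative ring structure on vector fields given by an `R`-bilinear
commutative associative unital multiplication `m`. -/
private noncomputable def vaCommRing
    (hm_addl : ∀ X Y Z : Fin n → MvPolynomial (Fin n) ℂ, m (X + Y) Z = m X Z + m Y Z)
    (hm_addr : ∀ X Y Z : Fin n → MvPolynomial (Fin n) ℂ, m X (Y + Z) = m X Y + m X Z)
    (hm_comm : ∀ X Y : Fin n → MvPolynomial (Fin n) ℂ, m X Y = m Y X)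
    (hm_assoc : ∀ X Y Z : Fin n → MvPolynomial (Fin n) ℂ, m (m X Y) Z = m X (m Y Z))
    (hm_e : ∀ X : Fin n → MvPolynomial (Fin n) ℂ, m e X = X) :
    CommRing (VA n m e) where
  add a b := ⟨a.un + b.un⟩
  zero := ⟨0⟩
  neg a := ⟨-a.un⟩
  mul a b := ⟨m a.un b.un⟩
  one := ⟨e⟩
  add_assoc a b c := VA.ext' (add_assoc _ _ _)
  zero_add a := VA.ext' (zero_add _)
  add_zero a := VA.ext' (add_zero _)
  add_comm a b := VA.ext' (add_comm _ _)
  neg_add_cancel a := VA.ext' (neg_add_cancel _)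
  nsmul k a := ⟨k • a.un⟩
  nsmul_zero a := VA.ext' (zero_nsmul _)
  nsmul_succ k a := VA.ext' (succ_nsmul _ _)
  zsmul k a := ⟨k • a.un⟩
  zsmul_zero' a := VA.ext' (zero_zsmul _)
  zsmul_succ' k a := VA.ext' (by
    show ((k.succ : ℤ)) • a.un = (k : ℤ) • a.un + a.un
    rw [show ((k.succ : ℕ) : ℤ) = (k : ℤ) + 1 by omega, add_zsmul, one_zsmul])
  zsmul_neg' k a := VA.ext' (by
    show (Int.negSucc k) • a.un = -(((k.succ : ℕ) : ℤ) • a.un)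
    rw [Int.negSucc_eq, neg_zsmul]
    norm_num)
  left_distrib a b c := VA.ext' (hm_addr _ _ _)
  right_distrib a b c := VA.ext' (hm_addl _ _ _)
  zero_mul a := VA.ext' (by
    have h := hm_addl 0 0 a.un
    rw [add_zero] at h
    exact add_left_cancel (h.symm.trans (add_zero _).symm))
  mul_zero a := VA.ext' (by
    have h := hm_addr a.un 0 0
    rw [add_zero] at h
    exact add_left_cancel (h.symm.trans (add_zero _).symm))
  mul_assoc a b c := VA.ext' (hm_assoc _ _ _)
  one_mul a := VA.ext' (hm_e _)
  mul_one a := VA.ext' ((hm_comm _ _).trans (hm_e _))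
  mul_comm a b := VA.ext' (hm_comm _ _)

private lemma iota_mem_ker
    (hm_addl : ∀ X Y Z : Fin n → MvPolynomial (Fin n) ℂ, m (X + Y) Z = m X Z + m Y Z)
    (hm_addr : ∀ X Y Z : Fin n → MvPolynomial (Fin n) ℂ, m X (Y + Z) = m X Y + m X Z)
    (hm_smull : ∀ (f : MvPolynomial (Fin n) ℂ) (X Y : Fin n → MvPolynomial (Fin n) ℂ),
      m (f • X) Y = f • m X Y)
    (hm_smulr : ∀ (f : MvPolynomial (Fin n) ℂ) (X Y : Fin n → MvPolynomial (Fin n) ℂ),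
      m X (f • Y) = f • m X Y)
    (hm_comm : ∀ X Y : Fin n → MvPolynomial (Fin n) ℂ, m X Y = m Y X)
    (hm_assoc : ∀ X Y Z : Fin n → MvPolynomial (Fin n) ℂ, m (m X Y) Z = m X (m Y Z))
    (hm_e : ∀ X : Fin n → MvPolynomial (Fin n) ℂ, m e X = X)
    (W : Fin n → MvPolynomial (Fin n) ℂ)
    (hW : iota n W ∈ Ideal.span ({iota n e - 1} ∪
      {s | ∃ X Y : Fin n → MvPolynomial (Fin n) ℂ,
        s = iota n X * iota n Y - iota n (m X Y)})) :
    W = 0 := by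
  letI : CommRing (VA n m e) := vaCommRing hm_addl hm_addr hm_comm hm_assoc hm_e
  have mul_def : ∀ a b : VA n m e, a * b = ⟨m a.un b.un⟩ := fun _ _ => rfl
  have one_def : (1 : VA n m e) = ⟨e⟩ := rfl
  have zero_def : (0 : VA n m e) = ⟨0⟩ := rfl
  have un_sum : ∀ (s : Finset (Fin n)) (F : Fin n → VA n m e),
      (∑ i ∈ s, F i).un = ∑ i ∈ s, (F i).un := by
    intro s F
    classical
    induction s using Finset.induction_on with
    | empty => rfl
    | insert _ _ h ih => rw [Finset.sum_insert h, Finset.sum_insert h, ← ih]; rfl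
  have hmee : m e e = e := hm_e e
  let F : ℂ →+* VA n m e :=
    { toFun := fun c => ⟨C c • e⟩
      map_one' := by
        rw [one_def]
        exact VA.ext' (by show (C (1:ℂ) : MvPolynomial (Fin n) ℂ) • e = e
                          rw [map_one, one_smul])
      map_mul' := fun c d => by
        rw [mul_def]
        refine VA.ext' ?_
        simp only
        rw [hm_smull, hm_smulr, hmee, map_mul, mul_smul]
      map_zero' := by rw [zero_def]; exact VA.ext' (by simp)
      map_add' := fun c d => by
        refine VA.ext' ?_
        show (C (c + d) • e) = C c • e + C d • e
        rw [map_add, add_smul] }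
  let g : (Fin n ⊕ Fin n) → VA n m e :=
    Sum.elim (fun i => ⟨(X i : MvPolynomial (Fin n) ℂ) • e⟩) (fun i => ⟨Pi.single i 1⟩)
  let ψ : MvPolynomial (Fin n ⊕ Fin n) ℂ →+* VA n m e := eval₂Hom F g
  have hphi : ∀ f : MvPolynomial (Fin n) ℂ, ψ (phi n f) = ⟨f • e⟩ := by
    intro f
    show eval₂ F g (rename Sum.inl f) = _
    rw [eval₂_rename]
    induction f using MvPolynomial.induction_on with
    | C a => rw [eval₂_C]; exact VA.ext' (by simp [F])
    | add p q hp hq =>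
        rw [eval₂_add, hp, hq]
        exact VA.ext' (by show p • e + q • e = (p + q) • e; rw [add_smul])
    | mul_X p i hp =>
        rw [eval₂_mul, hp, eval₂_X]
        show (⟨p • e⟩ * ⟨(X i : MvPolynomial (Fin n) ℂ) • e⟩ : VA n m e) = _
        rw [mul_def]
        refine VA.ext' ?_
        simp only
        rw [hm_smull, hm_smulr, hmee, mul_smul]
  have hiota : ∀ V : Fin n → MvPolynomial (Fin n) ℂ, ψ (iota n V) = ⟨V⟩ := by
    intro V
    unfold iota
    rw [map_sum]
    have term : ∀ i : Fin n,
        ψ (phi n (V i) * X (Sum.inr i)) = (⟨Pi.single i (V i)⟩ : VA n m e) := by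
      intro i
      rw [map_mul, hphi (V i)]
      have h2 : ψ (X (Sum.inr i)) = (⟨Pi.single i 1⟩ : VA n m e) := by
        show eval₂ F g (X (Sum.inr i)) = _
        rw [eval₂_X]
        rfl
      rw [h2, mul_def]
      refine VA.ext' ?_
      simp only
      rw [hm_smull, hm_e]
      funext j
      by_cases h : j = i <;> simp [Pi.single_apply, h]
    rw [Finset.sum_congr rfl fun i _ => term i]
    refine VA.ext' ?_
    rw [un_sum]
    simp only
    exact Finset.univ_sum_single V
  have hker : ∀ s ∈ Ideal.span ({iota n e - 1} ∪
      {s | ∃ X Y : Fin n → MvPolynomial (Fin n) ℂ,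
        s = iota n X * iota n Y - iota n (m X Y)}), ψ s = 0 := by
    intro s hs
    have hle : ({iota n e - 1} ∪
        {s | ∃ X Y : Fin n → MvPolynomial (Fin n) ℂ,
          s = iota n X * iota n Y - iota n (m X Y)} :
        Set (MvPolynomial (Fin n ⊕ Fin n) ℂ)) ⊆ ↑(RingHom.ker ψ) := by
      rintro x (hx | ⟨A, B, rfl⟩)
      · rcases Set.mem_singleton_iff.mp hx with rfl
        show ψ (iota n e - 1) = 0
        rw [map_sub, hiota, map_one, one_def, sub_self]
      · show ψ (iota n A * iota n B - iota n (m A B)) = 0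
        rw [map_sub, map_mul, hiota, hiota, hiota, mul_def, sub_self]
    exact Ideal.span_le.mpr hle hs
  have h0 := hker _ hW
  rw [hiota] at h0
  exact congrArg VA.un h0

end Psi

/-- Theorem 2.5 (coordinate version): the multiplication `m` satisfies the
F-manifold structure identity iff the ideal `J(m)` of the spectral cover is
stable under the canonical Poisson bracket. -/
theorem stmt_5 (n : ℕ) (hn : 1 ≤ n)
    (m : (Fin n → MvPolynomial (Fin n) ℂ) → (Fin n → MvPolynomial (Fin n) ℂ) →
      (Fin n → MvPolynomial (Fin n) ℂ))
    (e : Fin n → MvPolynomial (Fin n) ℂ)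
    (hm_addl : ∀ X Y Z : Fin n → MvPolynomial (Fin n) ℂ, m (X + Y) Z = m X Z + m Y Z)
    (hm_addr : ∀ X Y Z : Fin n → MvPolynomial (Fin n) ℂ, m X (Y + Z) = m X Y + m X Z)
    (hm_smull : ∀ (f : MvPolynomial (Fin n) ℂ) (X Y : Fin n → MvPolynomial (Fin n) ℂ),
      m (f • X) Y = f • m X Y)
    (hm_smulr : ∀ (f : MvPolynomial (Fin n) ℂ) (X Y : Fin n → MvPolynomial (Fin n) ℂ),
      m X (f • Y) = f • m X Y)
    (hm_comm : ∀ X Y : Fin n → MvPolynomial (Fin n) ℂ, m X Y = m Y X)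
    (hm_assoc : ∀ X Y Z : Fin n → MvPolynomial (Fin n) ℂ, m (m X Y) Z = m X (m Y Z))
    (hm_e : ∀ X : Fin n → MvPolynomial (Fin n) ℂ, m e X = X)
    (J : Ideal (MvPolynomial (Fin n ⊕ Fin n) ℂ))
    (hJ : J = Ideal.span ({iota n e - 1} ∪
      {s | ∃ X Y : Fin n → MvPolynomial (Fin n) ℂ,
        s = iota n X * iota n Y - iota n (m X Y)}))
    (P : (Fin n → MvPolynomial (Fin n) ℂ) → (Fin n → MvPolynomial (Fin n) ℂ) →
      (Fin n → MvPolynomial (Fin n) ℂ) → (Fin n → MvPolynomial (Fin n) ℂ))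
    (hP : ∀ X Z U : Fin n → MvPolynomial (Fin n) ℂ,
      P X Z U = lieVF n X (m Z U) - m (lieVF n X Z) U - m Z (lieVF n X U)) :
    (∀ X Y Z U : Fin n → MvPolynomial (Fin n) ℂ,
        P (m X Y) Z U = m X (P Y Z U) + m Y (P X Z U)) ↔
      (∀ a ∈ J, ∀ b ∈ J, pb n a b ∈ J) := by
  subst hJ
  have hgen2 : ∀ A B : Fin n → MvPolynomial (Fin n) ℂ,
      iota n A * iota n B - iota n (m A B) ∈ Ideal.span ({iota n e - 1} ∪
        {s | ∃ X Y : Fin n → MvPolynomial (Fin n) ℂ,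
          s = iota n X * iota n Y - iota n (m X Y)}) :=
    fun A B => Ideal.subset_span (Or.inr ⟨A, B, rfl⟩)
  constructor
  · intro hF
    have hPe : ∀ Z U : Fin n → MvPolynomial (Fin n) ℂ,
        m Z (lieVF n e U) + m U (lieVF n e Z) - lieVF n e (m Z U) = 0 := by
      intro Z U
      have h := hF e e Z U
      rw [hm_e e, hm_e (P e Z U)] at h
      have h0 : P e Z U = 0 := (add_left_cancel ((add_zero (P e Z U)).trans h)).symm
      rw [hP] at h0
      rw [hm_comm U (lieVF n e Z)]
      calc m Z (lieVF n e U) + m (lieVF n e Z) U - lieVF n e (m Z U)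
          = -(lieVF n e (m Z U) - m (lieVF n e Z) U - m Z (lieVF n e U)) := by abel
        _ = 0 := by rw [h0, neg_zero]
    have hQ0 : ∀ X Y Z U : Fin n → MvPolynomial (Fin n) ℂ, bigQ n m X Y Z U = 0 := by
      intro X Y Z U
      rw [Q_eq m hm_addr hm_comm hm_assoc, ← hP (m X Y) Z U, ← hP Y Z U, ← hP X Z U,
        hF X Y Z U, sub_self]
    apply stab_of_gens
    rintro g (rfl | ⟨X, Y, rfl⟩) g' (rfl | ⟨Z, U, rfl⟩)
    · have h1 : pb n (iota n e - 1) (iota n e - 1) = iota n (lieVF n e e) := by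
        simp only [pb_sub_left, pb_sub_right, pb_one_left, pb_one_right, pb_iota]
        ring
      have h2 : lieVF n e e = 0 := by funext i; simp [lieVF]
      rw [h1, h2, iota_zero]
      exact zero_mem _
    · have hr := reduce_e m e _ hgen2 Z U
      rw [hPe Z U, iota_zero, sub_zero] at hr
      exact hr
    · rw [pb_antisymm]
      apply neg_mem
      have hr := reduce_e m e _ hgen2 X Y
      rw [hPe X Y, iota_zero, sub_zero] at hr
      exact hr
    · have hr := reduce_main m _ hgen2 X Y Z U
      rw [hQ0, iota_zero, sub_zero] at hr
      exact hr
  · intro hstab X Y Z U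
    have hr := reduce_main m _ hgen2 X Y Z U
    have hpb := hstab _ (hgen2 X Y) _ (hgen2 Z U)
    have hmem : iota n (bigQ n m X Y Z U) ∈ Ideal.span ({iota n e - 1} ∪
        {s | ∃ X Y : Fin n → MvPolynomial (Fin n) ℂ,
          s = iota n X * iota n Y - iota n (m X Y)}) := by
      have h := sub_mem hpb hr
      rw [sub_sub_cancel] at h
      exact h
    have hQ : bigQ n m X Y Z U = 0 :=
      iota_mem_ker hm_addl hm_addr hm_smull hm_smulr hm_comm hm_assoc hm_e _ hmem
    rw [Q_eq m hm_addr hm_comm hm_assoc, ← hP (m X Y) Z U, ← hP Y Z U, ← hP X Z U] at hQ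
    exact sub_eq_zero.mp hQ
end

section
/- (First family, radical.) The radical of the ideal J equals the ideal of S generated by the n elements yᵢ − φ(ρᵢ), 1 ≤ i ≤ n (note y₁ − φ(ρ₁) = y₁ − 1). -/
open MvPolynomial

/-- The ideal of the first family (2.5.2): generated by `y₁ − 1` and all products
`(yᵢ − φ(ρᵢ))·(yⱼ − φ(ρⱼ))` (indices written `0,…,n−1`). -/
noncomputable def Jfam1 (n : ℕ) (hn : 0 < n) (ρ : Fin n → MvPolynomial (Fin n) ℂ) :
    Ideal (MvPolynomial (Fin n ⊕ Fin n) ℂ) :=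
  Ideal.span ({MvPolynomial.X (Sum.inr (⟨0, hn⟩ : Fin n)) - 1} ∪
    Set.range (fun p : Fin n × Fin n =>
      (MvPolynomial.X (Sum.inr p.1) - phi n (ρ p.1)) *
      (MvPolynomial.X (Sum.inr p.2) - phi n (ρ p.2))))

noncomputable def psi (n : ℕ) (ρ : Fin n → MvPolynomial (Fin n) ℂ) :
    MvPolynomial (Fin n ⊕ Fin n) ℂ →ₐ[ℂ] MvPolynomial (Fin n) ℂ :=
  aeval (Sum.elim MvPolynomial.X ρ)

lemma psi_phi (n : ℕ) (ρ : Fin n → MvPolynomial (Fin n) ℂ)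
    (p : MvPolynomial (Fin n) ℂ) : psi n ρ (phi n p) = p := by
  show aeval (Sum.elim MvPolynomial.X ρ) (rename Sum.inl p) = p
  rw [aeval_rename, Sum.elim_comp_inl, aeval_X_left_apply]

lemma mem_K (n : ℕ) (ρ : Fin n → MvPolynomial (Fin n) ℂ)
    (f : MvPolynomial (Fin n ⊕ Fin n) ℂ) :
    f - phi n (psi n ρ f) ∈ Ideal.span (Set.range fun i : Fin n =>
      MvPolynomial.X (Sum.inr i) - phi n (ρ i)) := by
  induction f using MvPolynomial.induction_on with
  | C a => simpa [psi, phi] using Ideal.zero_mem _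
  | add p q hp hq =>
      have h : p + q - phi n (psi n ρ (p + q)) =
          (p - phi n (psi n ρ p)) + (q - phi n (psi n ρ q)) := by
        rw [map_add, map_add]; ring
      rw [h]; exact Ideal.add_mem _ hp hq
  | mul_X p j hp =>
      cases j with
      | inl i =>
          have h : p * X (Sum.inl i) - phi n (psi n ρ (p * X (Sum.inl i))) =
              (p - phi n (psi n ρ p)) * X (Sum.inl i) := by
            simp only [map_mul, psi, phi, aeval_X, Sum.elim_inl, rename_X]
            ring
          rw [h]; exact Ideal.mul_mem_right _ _ hp
      | inr i =>
          have h : p * X (Sum.inr i) - phi n (psi n ρ (p * X (Sum.inr i))) =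
              p * (X (Sum.inr i) - phi n (ρ i)) +
              (p - phi n (psi n ρ p)) * phi n (ρ i) := by
            simp only [map_mul, psi, phi, aeval_X, Sum.elim_inr]
            ring
          rw [h]
          exact Ideal.add_mem _
            (Ideal.mul_mem_left _ _ (Ideal.subset_span ⟨i, rfl⟩))
            (Ideal.mul_mem_right _ _ hp)

lemma K_eq_ker (n : ℕ) (ρ : Fin n → MvPolynomial (Fin n) ℂ) :
    Ideal.span (Set.range fun i : Fin n =>
      MvPolynomial.X (Sum.inr i) - phi n (ρ i)) = RingHom.ker (psi n ρ) := by
  apply le_antisymm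
  · rw [Ideal.span_le]
    rintro _ ⟨i, rfl⟩
    show X (Sum.inr i) - phi n (ρ i) ∈ RingHom.ker (psi n ρ)
    rw [RingHom.mem_ker, map_sub, psi_phi]
    simp [psi]
  · intro f hf
    have hf0 : psi n ρ f = 0 := hf
    simpa [hf0] using mem_K n ρ f

/-- First family (2.5.2): the radical of `J` is generated by the `n` elements
`yᵢ − φ(ρᵢ)`. -/
theorem stmt_9 (n : ℕ) (hn : 0 < n) (ρ : Fin n → MvPolynomial (Fin n) ℂ)
    (hρ1 : ρ ⟨0, hn⟩ = 1)
    (hρd : ∀ i : Fin n, pderiv (⟨0, hn⟩ : Fin n) (ρ i) = 0) :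
    (Jfam1 n hn ρ).radical =
      Ideal.span (Set.range (fun i : Fin n =>
        MvPolynomial.X (Sum.inr i) - phi n (ρ i))) := by
  set K := Ideal.span (Set.range (fun i : Fin n =>
      MvPolynomial.X (Sum.inr i) - phi n (ρ i))) with hK
  have hKgen : ∀ i : Fin n, MvPolynomial.X (Sum.inr i) - phi n (ρ i) ∈ K :=
    fun i => Ideal.subset_span ⟨i, rfl⟩
  have hKprime : K.IsPrime := by
    rw [hK, K_eq_ker]
    exact RingHom.ker_isPrime _
  have hJK : Jfam1 n hn ρ ≤ K := by
    rw [Jfam1, Ideal.span_le]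
    rintro x (rfl | ⟨⟨i, j⟩, rfl⟩)
    · have := hKgen ⟨0, hn⟩
      rwa [hρ1, map_one] at this
    · exact Ideal.mul_mem_right _ _ (hKgen i)
  have hgen : ∀ i j : Fin n,
      (MvPolynomial.X (Sum.inr i) - phi n (ρ i)) *
      (MvPolynomial.X (Sum.inr j) - phi n (ρ j)) ∈ Jfam1 n hn ρ :=
    fun i j => Ideal.subset_span (Or.inr ⟨(i, j), rfl⟩)
  have hK2 : ∀ a ∈ K, ∀ b ∈ K, a * b ∈ Jfam1 n hn ρ := by
    intro a ha
    induction ha using Submodule.span_induction with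
    | mem a hmem =>
        obtain ⟨i, rfl⟩ := hmem
        intro b hb
        induction hb using Submodule.span_induction with
        | mem b hmem' => obtain ⟨j, rfl⟩ := hmem'; exact hgen i j
        | zero => simpa using Ideal.zero_mem _
        | add y z _ _ hy hz => rw [mul_add]; exact Ideal.add_mem _ hy hz
        | smul c y _ hy =>
            rw [mul_smul_comm]; exact Submodule.smul_mem _ _ hy
    | zero => intro b hb; simpa using Ideal.zero_mem _
    | add y z _ _ hy hz =>
        intro b hb; rw [add_mul]; exact Ideal.add_mem _ (hy b hb) (hz b hb)
    | smul c y _ hy =>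
        intro b hb; rw [smul_mul_assoc]; exact Submodule.smul_mem _ _ (hy b hb)
  apply le_antisymm
  · calc (Jfam1 n hn ρ).radical ≤ K.radical := Ideal.radical_mono hJK
      _ = K := hKprime.radical
  · intro x hx
    exact ⟨2, by rw [pow_two]; exact hK2 x hx x hx⟩
end

section
/- (First family, non-stability of the radical.) Suppose there exist indices i ≠ j with 2 ≤ i, j ≤ n such that ∂ρⱼ/∂tᵢ ≠ ∂ρᵢ/∂tⱼ in R. Then the radical of J is not Poisson-stable: for such i, j, the elements yᵢ − φ(ρᵢ) and yⱼ − φ(ρⱼ) lie in radical J, their canonical Poisson bracket equals φ(∂ρᵢ/∂tⱼ − ∂ρⱼ/∂tᵢ), and this bracket does not lie in radical J. -/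
open MvPolynomial

/-- First family (2.5.2): if `∂ρⱼ/∂tᵢ ≠ ∂ρᵢ/∂tⱼ` for some distinct `i, j ≥ 2`
(written `i, j ≥ 1` in `0`-based indexing), then the radical of `J` is not
Poisson-stable. -/
theorem stmt_10 (n : ℕ) (hn : 0 < n) (ρ : Fin n → MvPolynomial (Fin n) ℂ)
    (hρ1 : ρ ⟨0, hn⟩ = 1)
    (hρd : ∀ i : Fin n, pderiv (⟨0, hn⟩ : Fin n) (ρ i) = 0)
    (i j : Fin n) (hi : 1 ≤ (i : ℕ)) (hj : 1 ≤ (j : ℕ)) (hij : i ≠ j)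
    (hne : pderiv i (ρ j) ≠ pderiv j (ρ i)) :
    (MvPolynomial.X (Sum.inr i) - phi n (ρ i)) ∈ (Jfam1 n hn ρ).radical ∧
    (MvPolynomial.X (Sum.inr j) - phi n (ρ j)) ∈ (Jfam1 n hn ρ).radical ∧
    pb n (MvPolynomial.X (Sum.inr i) - phi n (ρ i))
         (MvPolynomial.X (Sum.inr j) - phi n (ρ j)) =
      phi n (pderiv j (ρ i) - pderiv i (ρ j)) ∧
    phi n (pderiv j (ρ i) - pderiv i (ρ j)) ∉ (Jfam1 n hn ρ).radical := by
  classical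
  -- derivative of renamed polynomials
  have hinr : ∀ (k : Fin n) (p : MvPolynomial (Fin n) ℂ),
      pderiv (Sum.inr k) (rename (Sum.inl : Fin n → Fin n ⊕ Fin n) p) = 0 := by
    intro k p
    apply pderiv_eq_zero_of_notMem_vars
    intro h
    have := MvPolynomial.vars_rename (Sum.inl : Fin n → Fin n ⊕ Fin n) p h
    simp at this
  have hinl : ∀ (k : Fin n) (p : MvPolynomial (Fin n) ℂ),
      pderiv (Sum.inl k) (rename (Sum.inl : Fin n → Fin n ⊕ Fin n) p)
        = rename Sum.inl (pderiv k p) :=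
    fun k p => pderiv_rename Sum.inl_injective k p
  -- radical membership of the linear generators
  have hrad : ∀ k : Fin n,
      (MvPolynomial.X (Sum.inr k) - phi n (ρ k)) ∈ (Jfam1 n hn ρ).radical := by
    intro k
    have : (MvPolynomial.X (Sum.inr k) - phi n (ρ k)) ^ 2 ∈ Jfam1 n hn ρ := by
      rw [pow_two]
      exact Ideal.subset_span (Or.inr ⟨(k, k), rfl⟩)
    exact ⟨2, this⟩
  refine ⟨hrad i, hrad j, ?_, ?_⟩
  · -- the Poisson bracket computation
    unfold pb phi
    have key : ∀ k : Fin n,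
        pderiv (Sum.inr k) (MvPolynomial.X (Sum.inr i) - rename Sum.inl (ρ i)) *
          pderiv (Sum.inl k) (MvPolynomial.X (Sum.inr j) - rename Sum.inl (ρ j)) -
        pderiv (Sum.inl k) (MvPolynomial.X (Sum.inr i) - rename Sum.inl (ρ i)) *
          pderiv (Sum.inr k) (MvPolynomial.X (Sum.inr j) - rename Sum.inl (ρ j)) =
        (if k = i then -(rename (Sum.inl : Fin n → Fin n ⊕ Fin n) (pderiv i (ρ j))) else 0) +
        (if k = j then rename (Sum.inl : Fin n → Fin n ⊕ Fin n) (pderiv j (ρ i)) else 0) := by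
      intro k
      rcases eq_or_ne k i with rfl | hki
      · have hkj : k ≠ j := hij
        simp [map_sub, hinr, hinl, pderiv_X_of_ne, hkj,
          (fun h => hkj (Sum.inr_injective h).symm : Sum.inr j ≠ Sum.inr k)]
      · rcases eq_or_ne k j with rfl | hkj
        · simp [map_sub, hinr, hinl, pderiv_X_of_ne, hki,
            (fun h => hki (Sum.inr_injective h).symm : Sum.inr i ≠ Sum.inr k)]
        · simp [map_sub, hinr, hinl, pderiv_X_of_ne, hki, hkj,
            (fun h => hki (Sum.inr_injective h).symm : Sum.inr i ≠ Sum.inr k),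
            (fun h => hkj (Sum.inr_injective h).symm : Sum.inr j ≠ Sum.inr k)]
    rw [Finset.sum_congr rfl fun k _ => key k, Finset.sum_add_distrib,
      Finset.sum_ite_eq' Finset.univ i, Finset.sum_ite_eq' Finset.univ j]
    simp [map_sub]
    ring
  · -- the bracket is not in the radical
    intro hmem
    set d : MvPolynomial (Fin n) ℂ := pderiv j (ρ i) - pderiv i (ρ j) with hd
    have hdne : d ≠ 0 := sub_ne_zero.mpr (Ne.symm hne)
    obtain ⟨x, hx⟩ : ∃ x : Fin n → ℂ, eval x d ≠ 0 := by
      by_contra h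
      push_neg at h
      exact hdne (MvPolynomial.funext fun x => by simpa using h x)
    set ev : MvPolynomial (Fin n ⊕ Fin n) ℂ →ₐ[ℂ] ℂ :=
      aeval (Sum.elim x (fun k => eval x (ρ k))) with hev
    have hevphi : ∀ p : MvPolynomial (Fin n) ℂ, ev (phi n p) = eval x p := by
      intro p
      simp only [hev, phi, AlgHom.coe_mk, aeval_rename, Sum.elim_comp_inl]
      rw [show (eval x : MvPolynomial (Fin n) ℂ → ℂ) = aeval x from
        (congrArg _ (coe_aeval_eq_eval x).symm)]
    have hevJ : ∀ f ∈ Jfam1 n hn ρ, ev f = 0 := by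
      intro f hf
      have hle : Jfam1 n hn ρ ≤ RingHom.ker (ev : MvPolynomial (Fin n ⊕ Fin n) ℂ →+* ℂ) := by
        rw [Jfam1, Ideal.span_le]
        rintro g (rfl | ⟨⟨a, b⟩, rfl⟩) <;>
          simp only [SetLike.mem_coe, RingHom.mem_ker, RingHom.coe_coe, map_sub, map_mul, map_one]
        · have : ev (MvPolynomial.X (Sum.inr (⟨0, hn⟩ : Fin n))) = eval x (ρ ⟨0, hn⟩) := by
            simp [hev]
          rw [this, hρ1]
          simp
        · have ha : ev (MvPolynomial.X (Sum.inr a)) = eval x (ρ a) := by simp [hev]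
          have hb : ev (MvPolynomial.X (Sum.inr b)) = eval x (ρ b) := by simp [hev]
          rw [ha, hb, hevphi, hevphi]
          ring
      exact hle hf
    obtain ⟨m, hm⟩ := hmem
    have : (ev (phi n d)) ^ m = 0 := by
      rw [← map_pow]
      exact hevJ _ hm
    rw [hevphi] at this
    exact hx (pow_eq_zero_iff'.mp this).1
end

section
/- (First family, tangent algebras.) Assume n ≥ 1. For every point τ : Fin n → ℂ, the quotient ℂ-algebra S/(J + the ideal generated by {tᵢ − τᵢ : 1 ≤ i ≤ n}) is isomorphic, as a ℂ-algebra, to MvPolynomial (Fin (n−1)) ℂ modulo the ideal generated by all products xᵢ·xⱼ of the variables (1 ≤ i, j ≤ n−1), i.e. to ℂ[x₁,…,x_{n−1}]/(xᵢxⱼ). -/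
open MvPolynomial

lemma sub_C_eval_mem {σ : Type*} {R : Type*} [CommRing R] (τ : σ → R)
    (p : MvPolynomial σ R) :
    p - C (eval τ p) ∈ Ideal.span (Set.range fun i => (X i : MvPolynomial σ R) - C (τ i)) := by
  set I := Ideal.span (Set.range fun i => (X i : MvPolynomial σ R) - C (τ i)) with hI
  induction p using MvPolynomial.induction_on with
  | C a => simp
  | add p q hp hq =>
      have := I.add_mem hp hq
      rw [eval_add, C_add]; convert this using 1; ring
  | mul_X p i hp =>
      have hy : (X i : MvPolynomial σ R) - C (τ i) ∈ I := Ideal.subset_span ⟨i, rfl⟩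
      have := I.add_mem (I.mul_mem_left p hy) (I.mul_mem_left (C (τ i)) hp)
      rw [eval_mul, eval_X, C_mul]; convert this using 1; ring

lemma aeval_C_eval {σ σ' : Type*} {R : Type*} [CommSemiring R] (τ : σ → R)
    (p : MvPolynomial σ R) :
    aeval (fun i => (C (τ i) : MvPolynomial σ' R)) p = C (eval τ p) := by
  induction p using MvPolynomial.induction_on with
  | C a => simp
  | add p q hp hq => rw [map_add, hp, hq, eval_add, C_add]
  | mul_X p i hp => rw [map_mul, hp, aeval_X, eval_mul, eval_X, C_mul]


/-- First family (2.5.2): at every point `τ`, the tangent algebra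
`S/(J + (tᵢ − τᵢ))` is isomorphic to `ℂ[x₁,…,x_{n−1}]/(xᵢxⱼ)`. -/
theorem stmt_12 (n : ℕ) (hn : 0 < n) (ρ : Fin n → MvPolynomial (Fin n) ℂ)
    (hρ1 : ρ ⟨0, hn⟩ = 1)
    (hρd : ∀ i : Fin n, pderiv (⟨0, hn⟩ : Fin n) (ρ i) = 0)
    (τ : Fin n → ℂ) :
    Nonempty
      ((MvPolynomial (Fin n ⊕ Fin n) ℂ ⧸
          (Jfam1 n hn ρ + Ideal.span (Set.range (fun i : Fin n =>
            MvPolynomial.X (Sum.inl i) - MvPolynomial.C (τ i))))) ≃ₐ[ℂ]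
        (MvPolynomial (Fin (n - 1)) ℂ ⧸
          (Ideal.span (Set.range (fun p : Fin (n - 1) × Fin (n - 1) =>
            MvPolynomial.X p.1 * MvPolynomial.X p.2)) :
            Ideal (MvPolynomial (Fin (n - 1)) ℂ)))) := by
  obtain ⟨m, rfl⟩ : ∃ m, n = m + 1 := ⟨n - 1, (Nat.succ_pred_eq_of_pos hn).symm⟩
  clear hρd
  have h0 : (⟨0, hn⟩ : Fin (m + 1)) = 0 := rfl
  rw [h0] at hρ1
  show Nonempty
      ((MvPolynomial (Fin (m + 1) ⊕ Fin (m + 1)) ℂ ⧸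
          (Jfam1 (m + 1) hn ρ + Ideal.span (Set.range (fun i : Fin (m + 1) =>
            MvPolynomial.X (Sum.inl i) - MvPolynomial.C (τ i))))) ≃ₐ[ℂ]
        (MvPolynomial (Fin m) ℂ ⧸
          (Ideal.span (Set.range (fun p : Fin m × Fin m =>
            MvPolynomial.X p.1 * MvPolynomial.X p.2)) :
            Ideal (MvPolynomial (Fin m) ℂ))))
  set c : Fin (m + 1) → ℂ := fun i => eval τ (ρ i) with hc
  have hc0 : c 0 = 1 := by simp [hc, hρ1]
  set K : Ideal (MvPolynomial (Fin (m + 1) ⊕ Fin (m + 1)) ℂ) :=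
    Jfam1 (m + 1) hn ρ + Ideal.span (Set.range (fun i : Fin (m + 1) =>
      MvPolynomial.X (Sum.inl i) - MvPolynomial.C (τ i))) with hK
  set I : Ideal (MvPolynomial (Fin (m)) ℂ) :=
    Ideal.span (Set.range (fun p : Fin (m) × Fin (m) =>
      MvPolynomial.X p.1 * MvPolynomial.X p.2)) with hI
  -- the downward algebra map
  set g : Fin (m + 1) ⊕ Fin (m + 1) → MvPolynomial (Fin (m)) ℂ :=
    Sum.elim (fun i => C (τ i))
      (fun i => C (c i) + (if h : i ≠ 0 then X (i.pred h) else 0)) with hg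
  set A : MvPolynomial (Fin (m + 1) ⊕ Fin (m + 1)) ℂ →ₐ[ℂ]
      MvPolynomial (Fin (m)) ℂ := aeval g with hA
  have hAXl : ∀ i : Fin (m + 1), A (X (Sum.inl i)) = C (τ i) := by
    intro i; rw [hA, aeval_X, hg, Sum.elim_inl]
  have hAXr : ∀ i : Fin (m + 1),
      A (X (Sum.inr i)) = C (c i) + (if h : i ≠ 0 then X (i.pred h) else 0) := by
    intro i; rw [hA, aeval_X, hg, Sum.elim_inr]
  have hAC : ∀ x : ℂ, A (C x) = C x := by
    intro x; rw [hA, aeval_C, MvPolynomial.algebraMap_eq]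
  have hAphi : ∀ p : MvPolynomial (Fin (m + 1)) ℂ, A (phi (m + 1) p) = C (eval τ p) := by
    intro p
    rw [hA, phi, aeval_rename]
    have : (g ∘ Sum.inl) = fun i => (C (τ i) : MvPolynomial (Fin (m)) ℂ) := by
      funext i; rw [hg]; rfl
    rw [this]
    exact aeval_C_eval τ p
  have key : ∀ i : Fin (m + 1), A (X (Sum.inr i) - phi (m + 1) (ρ i)) =
      (if h : i ≠ 0 then X (i.pred h) else 0) := by
    intro i
    have hci : C (eval τ (ρ i)) = (C (c i) : MvPolynomial (Fin (m)) ℂ) := rfl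
    rw [map_sub, hAphi, hAXr, hci]
    abel
  -- the upward algebra map
  set B : MvPolynomial (Fin (m)) ℂ →ₐ[ℂ]
      MvPolynomial (Fin (m + 1) ⊕ Fin (m + 1)) ℂ :=
    aeval (fun k : Fin (m) =>
      X (Sum.inr (Fin.succ k)) - phi (m + 1) (ρ (Fin.succ k))) with hB
  have hBX : ∀ k : Fin (m),
      B (X k) = X (Sum.inr (Fin.succ k)) - phi (m + 1) (ρ (Fin.succ k)) := by
    intro k; rw [hB, aeval_X]
  have hBC : ∀ x : ℂ, B (C x) = C x := by
    intro x; rw [hB, aeval_C, MvPolynomial.algebraMap_eq]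
  -- A kills K
  have hAK : ∀ a ∈ K, (Ideal.Quotient.mkₐ ℂ I).comp A a = 0 := by
    intro a ha
    suffices h : K ≤ RingHom.ker ((Ideal.Quotient.mkₐ ℂ I).comp A).toRingHom by exact h ha
    rw [hK, Jfam1, Ideal.add_eq_sup, ← Ideal.span_union, Ideal.span_le]
    rintro x hx
    rw [SetLike.mem_coe, RingHom.mem_ker]
    have hform : ∀ y : MvPolynomial (Fin (m + 1) ⊕ Fin (m + 1)) ℂ,
        ((Ideal.Quotient.mkₐ ℂ I).comp A).toRingHom y = Ideal.Quotient.mk I (A y) := by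
      intro y; rfl
    rw [hform, Ideal.Quotient.eq_zero_iff_mem]
    rcases hx with (rfl | ⟨p, rfl⟩) | ⟨i, rfl⟩
    · have : A (X (Sum.inr (⟨0, hn⟩ : Fin (m + 1))) - 1) = 0 := by
        rw [map_sub, map_one, h0, hAXr, hc0]
        simp
      rw [this]; exact I.zero_mem
    · rw [map_mul, key, key]
      by_cases h1 : p.1 ≠ 0
      · by_cases h2 : p.2 ≠ 0
        · rw [dif_pos h1, dif_pos h2, hI]
          exact Ideal.subset_span ⟨(p.1.pred h1, p.2.pred h2), by rfl⟩
        · rw [dif_neg h2, mul_zero]; exact I.zero_mem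
      · rw [dif_neg h1, zero_mul]; exact I.zero_mem
    · rw [map_sub, hAXl, hAC, sub_self]; exact I.zero_mem
  -- B maps I into K
  have hBI : ∀ a ∈ I, (Ideal.Quotient.mkₐ ℂ K).comp B a = 0 := by
    intro a ha
    suffices h : I ≤ RingHom.ker ((Ideal.Quotient.mkₐ ℂ K).comp B).toRingHom by exact h ha
    rw [hI, Ideal.span_le]
    rintro x ⟨p, rfl⟩
    rw [SetLike.mem_coe, RingHom.mem_ker]
    have hform : ∀ y : MvPolynomial (Fin (m)) ℂ,
        ((Ideal.Quotient.mkₐ ℂ K).comp B).toRingHom y = Ideal.Quotient.mk K (B y) := by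
      intro y; rfl
    rw [hform, Ideal.Quotient.eq_zero_iff_mem, map_mul, hBX, hBX, hK, Ideal.add_eq_sup]
    apply Ideal.mem_sup_left
    rw [Jfam1]
    exact Ideal.subset_span (Or.inr ⟨(p.1.succ, p.2.succ), by rfl⟩)
  set Abar := Ideal.Quotient.liftₐ K ((Ideal.Quotient.mkₐ ℂ I).comp A) hAK with hAbar
  set Bbar := Ideal.Quotient.liftₐ I ((Ideal.Quotient.mkₐ ℂ K).comp B) hBI with hBbar
  have hAbarmk : ∀ y, Abar (Ideal.Quotient.mk K y) = Ideal.Quotient.mk I (A y) := by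
    intro y; rw [hAbar]; rfl
  have hBbarmk : ∀ y, Bbar (Ideal.Quotient.mk I y) = Ideal.Quotient.mk K (B y) := by
    intro y; rw [hBbar]; rfl
  refine ⟨AlgEquiv.ofAlgHom Abar Bbar ?_ ?_⟩
  · apply Ideal.Quotient.algHom_ext
    apply MvPolynomial.algHom_ext
    intro k
    rw [AlgHom.comp_apply, AlgHom.comp_apply, Ideal.Quotient.mkₐ_eq_mk, hBbarmk, hAbarmk,
      AlgHom.comp_apply, Ideal.Quotient.mkₐ_eq_mk, hBX, key]
    rw [dif_pos (Fin.succ_ne_zero k), Fin.pred_succ, AlgHom.id_apply]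
  · apply Ideal.Quotient.algHom_ext
    apply MvPolynomial.algHom_ext
    intro v
    rw [AlgHom.comp_apply, AlgHom.comp_apply, Ideal.Quotient.mkₐ_eq_mk, hAbarmk, hBbarmk,
      AlgHom.comp_apply, Ideal.Quotient.mkₐ_eq_mk, AlgHom.id_apply, Ideal.Quotient.eq]
    rcases v with i | i
    · rw [hAXl, hBC, ← neg_sub]
      refine neg_mem ?_
      rw [hK, Ideal.add_eq_sup]
      exact Ideal.mem_sup_right (Ideal.subset_span ⟨i, rfl⟩)
    · rcases eq_or_ne i 0 with rfl | hi
      · rw [hAXr, dif_neg (by simp), add_zero, hc0, C_1, map_one, ← neg_sub]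
        refine neg_mem ?_
        rw [hK, Ideal.add_eq_sup]
        apply Ideal.mem_sup_left
        rw [Jfam1]
        exact Ideal.subset_span (Or.inl (by rw [h0]; rfl))
      · rw [hAXr, dif_pos hi, map_add, hBX, Fin.succ_pred]
        rw [hBC]
        have heq : C (c i) + (X (Sum.inr i) - phi (m + 1) (ρ i)) - X (Sum.inr i)
            = -(phi (m + 1) (ρ i) - C (eval τ (ρ i))) := by rw [hc]; ring
        rw [heq]
        apply K.neg_mem
        have hmem := sub_C_eval_mem τ (ρ i)
        have hmap := Ideal.mem_map_of_mem (phi (m + 1)).toRingHom hmem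
        rw [Ideal.map_span] at hmap
        have hle : Ideal.span ((phi (m + 1)).toRingHom ''
            Set.range fun j => (X j : MvPolynomial (Fin (m + 1)) ℂ) - C (τ j)) ≤ K := by
          rw [Ideal.span_le]
          rintro _ ⟨_, ⟨j, rfl⟩, rfl⟩
          rw [SetLike.mem_coe]
          have : (phi (m + 1)).toRingHom ((X j : MvPolynomial (Fin (m + 1)) ℂ) - C (τ j))
              = X (Sum.inl j) - C (τ j) := by
            simp [phi]
          rw [this, hK, Ideal.add_eq_sup]
          exact Ideal.mem_sup_right (Ideal.subset_span ⟨j, rfl⟩)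
        have : (phi (m + 1)).toRingHom (ρ i - C (eval τ (ρ i))) ∈ K := hle hmap
        simpa using this
end

section
/- (Second family, radical.) The radical of the ideal J equals the ideal of S generated by the n elements y₁ − 1, y₂ − t₃·y₁, y₃, y₄, …, yₙ. -/
open MvPolynomial

/-- `ρ₂ := t₃·y₁ + Σ_{k=3}^{n−1} (k−1)·t_{k+1}·y_k` of the second family (2.5.3),
written in `0`-based indexing: `ρ₂ = t₂·y₀ + Σ_{k=2}^{n−2} k·t_{k+1}·y_k`. -/
noncomputable def rho2 (n : ℕ) (hn : 3 ≤ n) : MvPolynomial (Fin n ⊕ Fin n) ℂ :=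
  MvPolynomial.X (Sum.inl (⟨2, by omega⟩ : Fin n)) *
    MvPolynomial.X (Sum.inr (⟨0, by omega⟩ : Fin n)) +
  ∑ k ∈ (Finset.Ico 2 (n - 1)).attach,
    MvPolynomial.C ((k.1 : ℂ)) *
      MvPolynomial.X (Sum.inl (⟨k.1 + 1, by
        have := Finset.mem_Ico.mp k.2; omega⟩ : Fin n)) *
      MvPolynomial.X (Sum.inr (⟨k.1, by
        have := Finset.mem_Ico.mp k.2; omega⟩ : Fin n))

/-- The ideal of the second family (2.5.3): generated by `y₁ − 1`, `(y₂ − ρ₂)²`,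
`(y₂ − ρ₂)·y₃`, `y₃^{n−1}`, and `y_k − y₃^{k−2}` for `k = 4,…,n`
(all written in `0`-based indexing). -/
noncomputable def Jfam2 (n : ℕ) (hn : 3 ≤ n) :
    Ideal (MvPolynomial (Fin n ⊕ Fin n) ℂ) :=
  Ideal.span ({MvPolynomial.X (Sum.inr (⟨0, by omega⟩ : Fin n)) - 1,
    (MvPolynomial.X (Sum.inr (⟨1, by omega⟩ : Fin n)) - rho2 n hn) ^ 2,
    (MvPolynomial.X (Sum.inr (⟨1, by omega⟩ : Fin n)) - rho2 n hn) *
      MvPolynomial.X (Sum.inr (⟨2, by omega⟩ : Fin n)),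
    MvPolynomial.X (Sum.inr (⟨2, by omega⟩ : Fin n)) ^ (n - 1)} ∪
    Set.range (fun k : (Finset.Ico 3 n : Finset ℕ) =>
      MvPolynomial.X (Sum.inr (⟨k.1, (Finset.mem_Ico.mp k.2).2⟩ : Fin n)) -
      MvPolynomial.X (Sum.inr (⟨2, by omega⟩ : Fin n)) ^ (k.1 - 1)))



/-- The substitution `y₀ ↦ 1`, `y₁ ↦ t₂`, `y_k ↦ 0` (`k ≥ 2`), `t_i ↦ t_i`. -/
noncomputable def sigma14 (n : ℕ) (hn : 3 ≤ n) :
    MvPolynomial (Fin n ⊕ Fin n) ℂ →ₐ[ℂ] MvPolynomial (Fin n ⊕ Fin n) ℂ :=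
  aeval (fun v => match v with
    | Sum.inl i => MvPolynomial.X (Sum.inl i)
    | Sum.inr j => if (j : ℕ) = 0 then 1
        else if (j : ℕ) = 1 then MvPolynomial.X (Sum.inl (⟨2, by omega⟩ : Fin n))
        else 0)

/-- The candidate radical ideal. -/
noncomputable def Kfam2 (n : ℕ) (hn : 3 ≤ n) :
    Ideal (MvPolynomial (Fin n ⊕ Fin n) ℂ) :=
  Ideal.span ({MvPolynomial.X (Sum.inr (⟨0, by omega⟩ : Fin n)) - 1,
    MvPolynomial.X (Sum.inr (⟨1, by omega⟩ : Fin n)) -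
      MvPolynomial.X (Sum.inl (⟨2, by omega⟩ : Fin n)) *
        MvPolynomial.X (Sum.inr (⟨0, by omega⟩ : Fin n))} ∪
    Set.range (fun k : (Finset.Ico 2 n : Finset ℕ) =>
      MvPolynomial.X (Sum.inr (⟨k.1, (Finset.mem_Ico.mp k.2).2⟩ : Fin n))))

lemma Kfam2_y0 (n : ℕ) (hn : 3 ≤ n) :
    MvPolynomial.X (Sum.inr (⟨0, by omega⟩ : Fin n)) - 1 ∈ Kfam2 n hn :=
  Ideal.subset_span (Or.inl (Set.mem_insert _ _))

lemma Kfam2_y1 (n : ℕ) (hn : 3 ≤ n) :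
    MvPolynomial.X (Sum.inr (⟨1, by omega⟩ : Fin n)) -
      MvPolynomial.X (Sum.inl (⟨2, by omega⟩ : Fin n)) *
        MvPolynomial.X (Sum.inr (⟨0, by omega⟩ : Fin n)) ∈ Kfam2 n hn :=
  Ideal.subset_span (Or.inl (Set.mem_insert_of_mem _ rfl))

lemma Kfam2_yk (n : ℕ) (hn : 3 ≤ n) (j : Fin n) (hj : 2 ≤ (j : ℕ)) :
    MvPolynomial.X (Sum.inr j) ∈ Kfam2 n hn := by
  refine Ideal.subset_span (Or.inr ⟨⟨j.1, Finset.mem_Ico.mpr ⟨hj, j.2⟩⟩, ?_⟩)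
  simp

lemma Kfam2_y1' (n : ℕ) (hn : 3 ≤ n) :
    MvPolynomial.X (Sum.inr (⟨1, by omega⟩ : Fin n)) -
      MvPolynomial.X (Sum.inl (⟨2, by omega⟩ : Fin n)) ∈ Kfam2 n hn := by
  have h : (MvPolynomial.X (Sum.inr (⟨1, by omega⟩ : Fin n)) -
      MvPolynomial.X (Sum.inl (⟨2, by omega⟩ : Fin n)) :
        MvPolynomial (Fin n ⊕ Fin n) ℂ) =
      (MvPolynomial.X (Sum.inr (⟨1, by omega⟩ : Fin n)) -
        MvPolynomial.X (Sum.inl (⟨2, by omega⟩ : Fin n)) *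
          MvPolynomial.X (Sum.inr (⟨0, by omega⟩ : Fin n))) +
      MvPolynomial.X (Sum.inl (⟨2, by omega⟩ : Fin n)) *
        (MvPolynomial.X (Sum.inr (⟨0, by omega⟩ : Fin n)) - 1) := by ring
  rw [h]
  exact (Kfam2 n hn).add_mem (Kfam2_y1 n hn)
    ((Kfam2 n hn).mul_mem_left _ (Kfam2_y0 n hn))

lemma rho2_sub (n : ℕ) (hn : 3 ≤ n) :
    rho2 n hn - MvPolynomial.X (Sum.inl (⟨2, by omega⟩ : Fin n)) *
        MvPolynomial.X (Sum.inr (⟨0, by omega⟩ : Fin n)) =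
      ∑ k ∈ (Finset.Ico 2 (n - 1)).attach,
        MvPolynomial.C ((k.1 : ℂ)) *
          MvPolynomial.X (Sum.inl (⟨k.1 + 1, by
            have := Finset.mem_Ico.mp k.2; omega⟩ : Fin n)) *
          MvPolynomial.X (Sum.inr (⟨k.1, by
            have := Finset.mem_Ico.mp k.2; omega⟩ : Fin n)) := by
  rw [rho2, add_sub_cancel_left]

/-- If an ideal contains all `y_j` for `j ≥ 2`, it contains `ρ₂ − t₂·y₀`. -/
lemma rho2_sub_mem (n : ℕ) (hn : 3 ≤ n)
    (I : Ideal (MvPolynomial (Fin n ⊕ Fin n) ℂ))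
    (hI : ∀ j : Fin n, 2 ≤ (j : ℕ) → MvPolynomial.X (Sum.inr j) ∈ I) :
    rho2 n hn - MvPolynomial.X (Sum.inl (⟨2, by omega⟩ : Fin n)) *
      MvPolynomial.X (Sum.inr (⟨0, by omega⟩ : Fin n)) ∈ I := by
  rw [rho2_sub n hn]
  refine Ideal.sum_mem _ (fun k _ => ?_)
  exact I.mul_mem_left _ (hI _ (Finset.mem_Ico.mp k.2).1)

lemma sigma14_sub_mem (n : ℕ) (hn : 3 ≤ n)
    (f : MvPolynomial (Fin n ⊕ Fin n) ℂ) :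
    f - sigma14 n hn f ∈ Kfam2 n hn := by
  set K := Kfam2 n hn with hK
  have hσX : ∀ v : Fin n ⊕ Fin n,
      MvPolynomial.X v - sigma14 n hn (MvPolynomial.X v) ∈ K := by
    rintro (i | j)
    · simp only [sigma14, aeval_X]
      simpa using K.zero_mem
    · rcases Nat.lt_or_ge (j : ℕ) 2 with hj | hj
      · have h01 : (j : ℕ) = 0 ∨ (j : ℕ) = 1 := by omega
        rcases h01 with h | h
        · have hj0 : j = (⟨0, by omega⟩ : Fin n) := Fin.ext h
          rw [hj0]
          simpa [sigma14] using Kfam2_y0 n hn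
        · have hj1 : j = (⟨1, by omega⟩ : Fin n) := Fin.ext h
          rw [hj1]
          simpa [sigma14] using Kfam2_y1' n hn
      · have h0 : (j : ℕ) ≠ 0 := by omega
        have h1 : (j : ℕ) ≠ 1 := by omega
        simpa [sigma14, h0, h1] using Kfam2_yk n hn j hj
  induction f using MvPolynomial.induction_on with
  | C a => simpa [sigma14] using K.zero_mem
  | add p q hp hq =>
    have h : p + q - sigma14 n hn (p + q) =
        (p - sigma14 n hn p) + (q - sigma14 n hn q) := by
      rw [map_add]; ring
    rw [h]; exact K.add_mem hp hq
  | mul_X p v hp =>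
    have h : p * MvPolynomial.X v - sigma14 n hn (p * MvPolynomial.X v) =
        (p - sigma14 n hn p) * MvPolynomial.X v +
        sigma14 n hn p *
          (MvPolynomial.X v - sigma14 n hn (MvPolynomial.X v)) := by
      rw [map_mul]; ring
    rw [h]
    exact K.add_mem (K.mul_mem_right _ hp) (K.mul_mem_left _ (hσX v))

lemma Kfam2_le_ker (n : ℕ) (hn : 3 ≤ n) :
    Kfam2 n hn ≤ RingHom.ker (sigma14 n hn).toRingHom := by
  rw [Kfam2, Ideal.span_le]
  rintro g (hg | ⟨k, rfl⟩)
  · rcases hg with rfl | rfl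
    · simp [RingHom.mem_ker, sigma14]
    · simp [RingHom.mem_ker, sigma14]
  · have hk := Finset.mem_Ico.mp k.2
    have h0 : k.1 ≠ 0 := by omega
    have h1 : k.1 ≠ 1 := by omega
    simp [RingHom.mem_ker, sigma14, h0, h1]

lemma Kfam2_radical (n : ℕ) (hn : 3 ≤ n) :
    (Kfam2 n hn).radical ≤ Kfam2 n hn := by
  intro f hf
  obtain ⟨m, hm⟩ := Ideal.mem_radical_iff.mp hf
  rcases Nat.eq_zero_or_pos m with rfl | hmpos
  · simp only [pow_zero] at hm
    exact (Ideal.eq_top_iff_one _).mpr hm ▸ Submodule.mem_top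
  · have h0 : sigma14 n hn f = 0 := by
      have hpow : (sigma14 n hn f) ^ m = 0 := by
        rw [← map_pow]
        exact Kfam2_le_ker n hn hm
      exact (pow_eq_zero_iff hmpos.ne').mp hpow
    have := sigma14_sub_mem n hn f
    rwa [h0, sub_zero] at this

lemma Jfam2_le_Kfam2 (n : ℕ) (hn : 3 ≤ n) : Jfam2 n hn ≤ Kfam2 n hn := by
  have hy1ρ : MvPolynomial.X (Sum.inr (⟨1, by omega⟩ : Fin n)) - rho2 n hn ∈
      Kfam2 n hn := by
    have h : MvPolynomial.X (Sum.inr (⟨1, by omega⟩ : Fin n)) - rho2 n hn =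
        (MvPolynomial.X (Sum.inr (⟨1, by omega⟩ : Fin n)) -
          MvPolynomial.X (Sum.inl (⟨2, by omega⟩ : Fin n)) *
            MvPolynomial.X (Sum.inr (⟨0, by omega⟩ : Fin n))) -
        (rho2 n hn - MvPolynomial.X (Sum.inl (⟨2, by omega⟩ : Fin n)) *
            MvPolynomial.X (Sum.inr (⟨0, by omega⟩ : Fin n))) := by ring
    rw [h]
    exact (Kfam2 n hn).sub_mem (Kfam2_y1 n hn)
      (rho2_sub_mem n hn _ (Kfam2_yk n hn))
  rw [Jfam2, Ideal.span_le]
  rintro g (hg | ⟨k, rfl⟩)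
  · rcases hg with rfl | rfl | rfl | rfl
    · exact Kfam2_y0 n hn
    · rw [pow_two]
      exact (Kfam2 n hn).mul_mem_left _ hy1ρ
    · exact (Kfam2 n hn).mul_mem_right _ hy1ρ
    · exact (Kfam2 n hn).pow_mem_of_mem (Kfam2_yk n hn _ (by norm_num)) _ (by omega)
  · have hk := Finset.mem_Ico.mp k.2
    refine (Kfam2 n hn).sub_mem (Kfam2_yk n hn _ (by simp; omega)) ?_
    exact (Kfam2 n hn).pow_mem_of_mem (Kfam2_yk n hn _ (by norm_num)) _ (by omega)

lemma Kfam2_le_radical (n : ℕ) (hn : 3 ≤ n) :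
    Kfam2 n hn ≤ (Jfam2 n hn).radical := by
  have hy2rad : MvPolynomial.X (Sum.inr (⟨2, by omega⟩ : Fin n)) ∈
      (Jfam2 n hn).radical :=
    Ideal.mem_radical_iff.mpr ⟨n - 1, Ideal.subset_span (Or.inl (by simp))⟩
  have hykrad : ∀ j : Fin n, 2 ≤ (j : ℕ) →
      MvPolynomial.X (Sum.inr j) ∈ (Jfam2 n hn).radical := by
    intro j hj
    rcases Nat.eq_or_lt_of_le hj with hj2 | hj3
    · have h : j = (⟨2, by omega⟩ : Fin n) := Fin.ext hj2.symm
      rw [h]; exact hy2rad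
    · have hmem : MvPolynomial.X (Sum.inr j) -
          MvPolynomial.X (Sum.inr (⟨2, by omega⟩ : Fin n)) ^ (j.1 - 1) ∈
          Jfam2 n hn := by
        refine Ideal.subset_span (Or.inr ⟨⟨j.1, Finset.mem_Ico.mpr ⟨hj3, j.2⟩⟩, ?_⟩)
        simp
      have h : (MvPolynomial.X (Sum.inr j) : MvPolynomial (Fin n ⊕ Fin n) ℂ) =
          (MvPolynomial.X (Sum.inr j) -
            MvPolynomial.X (Sum.inr (⟨2, by omega⟩ : Fin n)) ^ (j.1 - 1)) +
          MvPolynomial.X (Sum.inr (⟨2, by omega⟩ : Fin n)) ^ (j.1 - 1) := by ring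
      rw [h]
      exact Ideal.add_mem _ (Ideal.le_radical hmem)
        (Ideal.pow_mem_of_mem _ hy2rad _ (by omega))
  rw [Kfam2, Ideal.span_le]
  rintro g (hg | ⟨k, rfl⟩)
  · rcases hg with rfl | rfl
    · exact Ideal.le_radical (Ideal.subset_span (Or.inl (by simp)))
    · have hρ : MvPolynomial.X (Sum.inr (⟨1, by omega⟩ : Fin n)) - rho2 n hn ∈
          (Jfam2 n hn).radical :=
        Ideal.mem_radical_iff.mpr ⟨2, Ideal.subset_span (Or.inl (by simp))⟩
      have hρ2 := rho2_sub_mem n hn (Jfam2 n hn).radical hykrad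
      have h : (MvPolynomial.X (Sum.inr (⟨1, by omega⟩ : Fin n)) -
          MvPolynomial.X (Sum.inl (⟨2, by omega⟩ : Fin n)) *
            MvPolynomial.X (Sum.inr (⟨0, by omega⟩ : Fin n)) :
            MvPolynomial (Fin n ⊕ Fin n) ℂ) =
          (MvPolynomial.X (Sum.inr (⟨1, by omega⟩ : Fin n)) - rho2 n hn) +
          (rho2 n hn - MvPolynomial.X (Sum.inl (⟨2, by omega⟩ : Fin n)) *
            MvPolynomial.X (Sum.inr (⟨0, by omega⟩ : Fin n))) := by ring
      rw [h]
      exact Ideal.add_mem _ hρ hρ2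
  · exact hykrad _ (Finset.mem_Ico.mp k.2).1

/-- Second family (2.5.3): the radical of `J` is generated by
`y₁ − 1`, `y₂ − t₃·y₁`, `y₃`, `y₄`, …, `yₙ` (in `0`-based indexing:
`y₀ − 1`, `y₁ − t₂·y₀`, `y₂, …, y_{n−1}`). -/
theorem stmt_14 (n : ℕ) (hn : 3 ≤ n) :
    (Jfam2 n hn).radical =
      Ideal.span ({MvPolynomial.X (Sum.inr (⟨0, by omega⟩ : Fin n)) - 1,
        MvPolynomial.X (Sum.inr (⟨1, by omega⟩ : Fin n)) -
          MvPolynomial.X (Sum.inl (⟨2, by omega⟩ : Fin n)) *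
            MvPolynomial.X (Sum.inr (⟨0, by omega⟩ : Fin n))} ∪
        Set.range (fun k : (Finset.Ico 2 n : Finset ℕ) =>
          MvPolynomial.X (Sum.inr (⟨k.1, (Finset.mem_Ico.mp k.2).2⟩ : Fin n)))) := by
  show (Jfam2 n hn).radical = Kfam2 n hn
  exact le_antisymm
    (le_trans (Ideal.radical_mono (Jfam2_le_Kfam2 n hn)) (Kfam2_radical n hn))
    (Kfam2_le_radical n hn)
end

section
/- (Second family, non-stability of the radical.) The radical of J is not Poisson-stable: the elements y₂ − t₃·y₁ and y₃ lie in radical J, their canonical Poisson bracket satisfies {y₂ − t₃·y₁, y₃} = y₁, and y₁ does not lie in radical J. -/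
open MvPolynomial

/-- Second family (2.5.3): the radical of `J` is not Poisson-stable:
`y₂ − t₃·y₁` and `y₃` lie in it, their Poisson bracket is `y₁`, but `y₁` does
not lie in the radical (in `0`-based indexing: `{y₁ − t₂·y₀, y₂} = y₀`). -/
theorem stmt_15 (n : ℕ) (hn : 3 ≤ n) :
    (MvPolynomial.X (Sum.inr (⟨1, by omega⟩ : Fin n)) -
        MvPolynomial.X (Sum.inl (⟨2, by omega⟩ : Fin n)) *
          MvPolynomial.X (Sum.inr (⟨0, by omega⟩ : Fin n))) ∈ (Jfam2 n hn).radical ∧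
    MvPolynomial.X (Sum.inr (⟨2, by omega⟩ : Fin n)) ∈ (Jfam2 n hn).radical ∧
    pb n (MvPolynomial.X (Sum.inr (⟨1, by omega⟩ : Fin n)) -
        MvPolynomial.X (Sum.inl (⟨2, by omega⟩ : Fin n)) *
          MvPolynomial.X (Sum.inr (⟨0, by omega⟩ : Fin n)))
      (MvPolynomial.X (Sum.inr (⟨2, by omega⟩ : Fin n))) =
      MvPolynomial.X (Sum.inr (⟨0, by omega⟩ : Fin n)) ∧
    MvPolynomial.X (Sum.inr (⟨0, by omega⟩ : Fin n)) ∉ (Jfam2 n hn).radical := by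
  have hy2 : MvPolynomial.X (Sum.inr (⟨2, by omega⟩ : Fin n)) ∈ (Jfam2 n hn).radical := by
    rw [Ideal.mem_radical_iff]
    exact ⟨n - 1, Ideal.subset_span (Or.inl (by simp))⟩
  have hyk : ∀ (k : ℕ) (hk2 : 2 ≤ k) (hkn : k < n),
      MvPolynomial.X (Sum.inr (⟨k, hkn⟩ : Fin n)) ∈ (Jfam2 n hn).radical := by
    intro k hk2 hkn
    rcases eq_or_lt_of_le hk2 with h | h
    · subst h; exact hy2
    · have hmem : MvPolynomial.X (Sum.inr (⟨k, hkn⟩ : Fin n)) -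
          MvPolynomial.X (Sum.inr (⟨2, by omega⟩ : Fin n)) ^ (k - 1) ∈ Jfam2 n hn :=
        Ideal.subset_span (Or.inr ⟨⟨k, Finset.mem_Ico.mpr ⟨h, hkn⟩⟩, rfl⟩)
      have hpow : MvPolynomial.X (Sum.inr (⟨2, by omega⟩ : Fin n)) ^ (k - 1)
          ∈ (Jfam2 n hn).radical :=
        Ideal.pow_mem_of_mem _ hy2 _ (by omega)
      have := Ideal.add_mem _ (Ideal.le_radical hmem) hpow
      simpa using this
  refine ⟨?_, hy2, ?_, ?_⟩
  · -- part 1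
    have h1 : MvPolynomial.X (Sum.inr (⟨1, by omega⟩ : Fin n)) -
        MvPolynomial.X (Sum.inl (⟨2, by omega⟩ : Fin n)) *
          MvPolynomial.X (Sum.inr (⟨0, by omega⟩ : Fin n))
        = (MvPolynomial.X (Sum.inr (⟨1, by omega⟩ : Fin n)) - rho2 n hn) +
          ∑ k ∈ (Finset.Ico 2 (n - 1)).attach,
            MvPolynomial.C ((k.1 : ℂ)) *
              MvPolynomial.X (Sum.inl (⟨k.1 + 1, by
                have := Finset.mem_Ico.mp k.2; omega⟩ : Fin n)) *
              MvPolynomial.X (Sum.inr (⟨k.1, by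
                have := Finset.mem_Ico.mp k.2; omega⟩ : Fin n)) := by
      rw [rho2]; ring
    rw [h1]
    refine Ideal.add_mem _ ?_ (Ideal.sum_mem _ ?_)
    · rw [Ideal.mem_radical_iff]
      exact ⟨2, Ideal.subset_span (Or.inl (by simp))⟩
    · intro k _
      have hk := Finset.mem_Ico.mp k.2
      exact Ideal.mul_mem_left _ _ (hyk k.1 hk.1 (by omega))
  · -- part 3: the bracket computation
    rw [pb, Finset.sum_eq_single (⟨2, by omega⟩ : Fin n)]
    · simp [pderiv_X, Pi.single_apply, Fin.ext_iff]
    · intro b _ hb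
      have hb2 : b.1 ≠ 2 := fun h => hb (Fin.ext h)
      simp [pderiv_X, Pi.single_apply, Fin.ext_iff, hb2]
    · intro h; exact absurd (Finset.mem_univ _) h
  · -- part 4
    intro hmem
    obtain ⟨m, hm⟩ := Ideal.mem_radical_iff.mp hmem
    set σ : Fin n ⊕ Fin n → ℂ :=
      Sum.elim (fun _ => 0) (fun i => if i.1 = 0 then 1 else 0) with hσ
    have hker : Jfam2 n hn ≤ RingHom.ker (aeval σ (R := ℂ)) := by
      rw [Jfam2, Ideal.span_le]
      have hrho : eval (Sum.elim (fun _ => (0:ℂ)) (fun i : Fin n => if i.1 = 0 then (1:ℂ) else 0)) (rho2 n hn) = 0 := by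
        rw [rho2]; simp [hσ]
      rintro x (hx | ⟨k, rfl⟩)
      · simp only [Set.mem_insert_iff, Set.mem_singleton_iff] at hx
        rcases hx with rfl | rfl | rfl | rfl <;>
          simp [RingHom.mem_ker, hrho, hσ, zero_pow (by omega : n - 1 ≠ 0)]
      · have hk := Finset.mem_Ico.mp k.2
        simp [RingHom.mem_ker, hσ, zero_pow (by omega : k.1 - 1 ≠ 0)]
        omega
    have h0 : aeval σ ((MvPolynomial.X (Sum.inr (⟨0, by omega⟩ : Fin n)) :
        MvPolynomial (Fin n ⊕ Fin n) ℂ) ^ m) = 0 := hker hm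
    rw [map_pow, aeval_X] at h0
    simp [hσ] at h0
end

section
/- (Second family, spectral cover flat of degree n.) Regard the quotient S/J as an R-module via the algebra map φ : R → S followed by the quotient projection. Then the R-linear map from vector fields to S/J sending X = (X₁,…,Xₙ) : Fin n → R to the class of ι(X) = Σᵢ φ(Xᵢ)·yᵢ modulo J is a bijection (an isomorphism of R-modules). In particular S/J is a free R-module of rank n. -/
open MvPolynomial

namespace S16

variable (n : ℕ) (hn : 3 ≤ n)

/-- linear lemmas for iota -/
lemma iota_add (Xf Yf : Fin n → MvPolynomial (Fin n) ℂ) :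
    iota n (Xf + Yf) = iota n Xf + iota n Yf := by
  simp [iota, ← Finset.sum_add_distrib, add_mul]

lemma iota_sub (Xf Yf : Fin n → MvPolynomial (Fin n) ℂ) :
    iota n (Xf - Yf) = iota n Xf - iota n Yf := by
  simp [iota, ← Finset.sum_sub_distrib, sub_mul]

lemma iota_smul (r : MvPolynomial (Fin n) ℂ) (Xf : Fin n → MvPolynomial (Fin n) ℂ) :
    iota n (r • Xf) = phi n r * iota n Xf := by
  simp [iota, Finset.mul_sum, mul_assoc]

lemma iota_zero : iota n 0 = 0 := by simp [iota]

lemma iota_single (j : Fin n) (p : MvPolynomial (Fin n) ℂ) :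
    iota n (Pi.single j p) = phi n p * MvPolynomial.X (Sum.inr j) := by
  rw [iota, Finset.sum_eq_single j]
  · simp
  · intro b _ hb; simp [Pi.single_eq_of_ne hb]
  · simp

lemma phi_C (a : ℂ) : phi n (C a) = C a := by simp [phi]

lemma phi_X (i : Fin n) : phi n (X i) = X (Sum.inl i) := by simp [phi]


-- membership of generators
lemma mem_g0 : (MvPolynomial.X (Sum.inr (⟨0, by omega⟩ : Fin n)) - 1) ∈ Jfam2 n hn :=
  Ideal.subset_span (by simp)

lemma mem_g1 : ((MvPolynomial.X (Sum.inr (⟨1, by omega⟩ : Fin n)) - rho2 n hn) ^ 2) ∈ Jfam2 n hn :=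
  Ideal.subset_span (by simp)

lemma mem_g2 : ((MvPolynomial.X (Sum.inr (⟨1, by omega⟩ : Fin n)) - rho2 n hn) *
      MvPolynomial.X (Sum.inr (⟨2, by omega⟩ : Fin n))) ∈ Jfam2 n hn :=
  Ideal.subset_span (by simp)

lemma mem_g3 : (MvPolynomial.X (Sum.inr (⟨2, by omega⟩ : Fin n)) ^ (n-1)) ∈ Jfam2 n hn :=
  Ideal.subset_span (by simp)

lemma mem_rel (j : Fin n) (hj : 2 ≤ j.1) :
    (MvPolynomial.X (Sum.inr j) -
      MvPolynomial.X (Sum.inr (⟨2, by omega⟩ : Fin n)) ^ (j.1 - 1)) ∈ Jfam2 n hn := by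
  rcases eq_or_lt_of_le hj with h | h
  · have hje : j = (⟨2, by omega⟩ : Fin n) := by ext; simp [← h]
    rw [hje]
    simp
  · refine Ideal.subset_span (Or.inr ⟨⟨j.1, Finset.mem_Ico.mpr ⟨by omega, j.2⟩⟩, ?_⟩)
    simp


def T (s : MvPolynomial (Fin n ⊕ Fin n) ℂ) : Prop :=
  ∃ Xf, Ideal.Quotient.mk (Jfam2 n hn) s = Ideal.Quotient.mk (Jfam2 n hn) (iota n Xf)

variable {n hn}

lemma T_congr {s s' : MvPolynomial (Fin n ⊕ Fin n) ℂ}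
    (h : Ideal.Quotient.mk (Jfam2 n hn) s = Ideal.Quotient.mk (Jfam2 n hn) s')
    (h' : T n hn s') : T n hn s := by
  obtain ⟨Xf, hX⟩ := h'
  exact ⟨Xf, h.trans hX⟩

lemma T_congr' {s s' : MvPolynomial (Fin n ⊕ Fin n) ℂ}
    (h : s - s' ∈ Jfam2 n hn) (h' : T n hn s') : T n hn s :=
  T_congr (by rwa [Ideal.Quotient.eq]) h'

lemma T_zero : T n hn 0 := ⟨0, by simp [iota_zero]⟩

lemma T_add {s s' : MvPolynomial (Fin n ⊕ Fin n) ℂ}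
    (h : T n hn s) (h' : T n hn s') : T n hn (s + s') := by
  obtain ⟨Xf, hX⟩ := h; obtain ⟨Yf, hY⟩ := h'
  exact ⟨Xf + Yf, by rw [map_add, hX, hY, iota_add, map_add]⟩

lemma T_sub {s s' : MvPolynomial (Fin n ⊕ Fin n) ℂ}
    (h : T n hn s) (h' : T n hn s') : T n hn (s - s') := by
  obtain ⟨Xf, hX⟩ := h; obtain ⟨Yf, hY⟩ := h'
  exact ⟨Xf - Yf, by rw [map_sub, hX, hY, iota_sub, map_sub]⟩

lemma T_smul {s : MvPolynomial (Fin n ⊕ Fin n) ℂ} (r : MvPolynomial (Fin n) ℂ)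
    (h : T n hn s) : T n hn (phi n r * s) := by
  obtain ⟨Xf, hX⟩ := h
  exact ⟨r • Xf, by rw [map_mul, hX, iota_smul, map_mul]⟩

lemma T_sum {α : Type*} (s : Finset α) (f : α → MvPolynomial (Fin n ⊕ Fin n) ℂ)
    (h : ∀ a ∈ s, T n hn (f a)) : T n hn (∑ a ∈ s, f a) := by
  classical
  induction s using Finset.induction with
  | empty => simpa using T_zero
  | insert _ _ ha ih =>
    rw [Finset.sum_insert ha]
    exact T_add (h _ (Finset.mem_insert_self _ _))
      (ih fun a h' => h _ (Finset.mem_insert_of_mem h'))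

lemma T_y (j : Fin n) : T n hn (MvPolynomial.X (Sum.inr j)) :=
  ⟨Pi.single j 1, by rw [iota_single]; simp⟩

lemma T_one : T n hn 1 := by
  refine T_congr' ?_ (T_y (⟨0, by omega⟩ : Fin n))
  simpa using (Jfam2 n hn).neg_mem (mem_g0 n hn)


lemma T_pow (m : ℕ) : T n hn (X (Sum.inr (⟨2, by omega⟩ : Fin n)) ^ m) := by
  rcases Nat.eq_zero_or_pos m with hm | hm
  · subst hm; simpa using T_one
  rcases le_or_gt m (n-2) with hm2 | hm2
  · refine T_congr' ?_ (T_y (⟨m+1, by omega⟩ : Fin n))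
    have h := (Jfam2 n hn).neg_mem (mem_rel n hn (⟨m+1, by omega⟩ : Fin n) (by simp; omega))
    simpa using h
  · refine T_congr' ?_ T_zero
    rw [sub_zero, show m = (n-1) + (m - (n-1)) by omega, pow_add]
    exact Ideal.mul_mem_right _ _ (mem_g3 n hn)

lemma T_y0_mul (w : MvPolynomial (Fin n ⊕ Fin n) ℂ) (h : T n hn w) :
    T n hn (X (Sum.inr (⟨0, by omega⟩ : Fin n)) * w) := by
  refine T_congr' ?_ h
  have : X (Sum.inr (⟨0, by omega⟩ : Fin n)) * w - w =
      (X (Sum.inr (⟨0, by omega⟩ : Fin n)) - 1) * w := by ring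
  rw [this]
  exact Ideal.mul_mem_right _ _ (mem_g0 n hn)

lemma T_rel_mul (j : Fin n) (hj : 2 ≤ j.1) (w : MvPolynomial (Fin n ⊕ Fin n) ℂ)
    (h : T n hn (X (Sum.inr (⟨2, by omega⟩ : Fin n)) ^ (j.1 - 1) * w)) :
    T n hn (X (Sum.inr j) * w) := by
  refine T_congr' ?_ h
  have : X (Sum.inr j) * w - X (Sum.inr (⟨2, by omega⟩ : Fin n)) ^ (j.1 - 1) * w =
      (X (Sum.inr j) - X (Sum.inr (⟨2, by omega⟩ : Fin n)) ^ (j.1 - 1)) * w := by ring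
  rw [this]
  exact Ideal.mul_mem_right _ _ (mem_rel n hn j hj)

lemma rho2_mul (w : MvPolynomial (Fin n ⊕ Fin n) ℂ) :
    rho2 n hn * w =
      phi n (X (⟨2, by omega⟩ : Fin n)) * (X (Sum.inr (⟨0, by omega⟩ : Fin n)) * w) +
      ∑ k ∈ (Finset.Ico 2 (n - 1)).attach,
        phi n (C ((k.1 : ℂ)) * X (⟨k.1 + 1, by
          have := Finset.mem_Ico.mp k.2; omega⟩ : Fin n)) *
          (X (Sum.inr (⟨k.1, by
            have := Finset.mem_Ico.mp k.2; omega⟩ : Fin n)) * w) := by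
  rw [rho2, add_mul, Finset.sum_mul]
  congr 1
  · simp [phi]; ring
  · refine Finset.sum_congr rfl fun k _ => ?_
    simp [phi]; ring

lemma Trho (m : ℕ) :
    T n hn (rho2 n hn * X (Sum.inr (⟨2, by omega⟩ : Fin n)) ^ m) := by
  rw [rho2_mul]
  refine T_add (T_smul _ (T_y0_mul _ (T_pow m))) (T_sum _ _ fun k _ => T_smul _ ?_)
  refine T_rel_mul _ (by simpa using (Finset.mem_Ico.mp k.2).1) _ ?_
  rw [← pow_add]
  exact T_pow _

lemma T_rho : T n hn (rho2 n hn) := by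
  have := Trho (n := n) (hn := hn) 0
  simpa using this

lemma S3 (m : ℕ) (hm : 1 ≤ m) :
    T n hn (X (Sum.inr (⟨1, by omega⟩ : Fin n)) *
      X (Sum.inr (⟨2, by omega⟩ : Fin n)) ^ m) := by
  refine T_congr' ?_ (Trho m)
  have hmm : m = (m-1) + 1 := by omega
  have : X (Sum.inr (⟨1, by omega⟩ : Fin n)) * X (Sum.inr (⟨2, by omega⟩ : Fin n)) ^ m -
      rho2 n hn * X (Sum.inr (⟨2, by omega⟩ : Fin n)) ^ m =
      ((X (Sum.inr (⟨1, by omega⟩ : Fin n)) - rho2 n hn) *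
        X (Sum.inr (⟨2, by omega⟩ : Fin n))) *
        X (Sum.inr (⟨2, by omega⟩ : Fin n)) ^ (m-1) := by
    rw [show (X (Sum.inr (⟨2, by omega⟩ : Fin n)) : MvPolynomial (Fin n ⊕ Fin n) ℂ) ^ m
        = X (Sum.inr (⟨2, by omega⟩ : Fin n)) ^ ((m-1)+1) by rw [← hmm], pow_succ]
    ring
  rw [this]
  exact Ideal.mul_mem_right _ _ (mem_g2 n hn)

lemma T_y_mul_pow (i : Fin n) (m : ℕ) (hm : 1 ≤ m) :
    T n hn (X (Sum.inr i) * X (Sum.inr (⟨2, by omega⟩ : Fin n)) ^ m) := by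
  rcases Nat.lt_or_ge i.1 2 with hi | hi
  · rcases Nat.lt_or_ge i.1 1 with hi0 | hi1
    · have : i = (⟨0, by omega⟩ : Fin n) := by ext; simp only [Fin.val_mk]; omega
      rw [this]; exact T_y0_mul _ (T_pow m)
    · have : i = (⟨1, by omega⟩ : Fin n) := by ext; simp only [Fin.val_mk]; omega
      rw [this]; exact S3 m hm
  · refine T_rel_mul _ hi _ ?_
    rw [← pow_add]; exact T_pow _

lemma Trho_y1 : T n hn (rho2 n hn * X (Sum.inr (⟨1, by omega⟩ : Fin n))) := by
  rw [rho2_mul]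
  refine T_add (T_smul _ (T_y0_mul _ (T_y _))) (T_sum _ _ fun k _ => T_smul _ ?_)
  refine T_rel_mul _ (by simpa using (Finset.mem_Ico.mp k.2).1) _ ?_
  rw [mul_comm]
  exact S3 _ (by simp only [Fin.val_mk]; have := (Finset.mem_Ico.mp k.2).1; omega)

lemma Trho_rho : T n hn (rho2 n hn * rho2 n hn) := by
  rw [rho2_mul]
  refine T_add (T_smul _ (T_y0_mul _ T_rho)) (T_sum _ _ fun k _ => T_smul _ ?_)
  refine T_rel_mul _ (by simpa using (Finset.mem_Ico.mp k.2).1) _ ?_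
  rw [mul_comm]
  exact Trho _

lemma T_y1y1 : T n hn (X (Sum.inr (⟨1, by omega⟩ : Fin n)) *
    X (Sum.inr (⟨1, by omega⟩ : Fin n))) := by
  refine T_congr' ?_ (T_sub (T_add Trho_y1 Trho_y1) Trho_rho)
  have : X (Sum.inr (⟨1, by omega⟩ : Fin n)) * X (Sum.inr (⟨1, by omega⟩ : Fin n)) -
      (rho2 n hn * X (Sum.inr (⟨1, by omega⟩ : Fin n)) +
       rho2 n hn * X (Sum.inr (⟨1, by omega⟩ : Fin n)) - rho2 n hn * rho2 n hn) =
      (X (Sum.inr (⟨1, by omega⟩ : Fin n)) - rho2 n hn) ^ 2 := by ring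
  rw [this]
  exact mem_g1 n hn

lemma T_yy (i j : Fin n) : T n hn (X (Sum.inr i) * X (Sum.inr j)) := by
  rcases Nat.lt_or_ge j.1 1 with hj0 | hj1
  · have : j = (⟨0, by omega⟩ : Fin n) := by ext; simp only [Fin.val_mk]; omega
    rw [this, mul_comm]; exact T_y0_mul _ (T_y i)
  rcases Nat.lt_or_ge j.1 2 with hj1' | hj2
  · have hj : j = (⟨1, by omega⟩ : Fin n) := by ext; simp only [Fin.val_mk]; omega
    rcases Nat.lt_or_ge i.1 1 with hi0 | hi1
    · have : i = (⟨0, by omega⟩ : Fin n) := by ext; simp only [Fin.val_mk]; omega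
      rw [this]; exact T_y0_mul _ (T_y j)
    rcases Nat.lt_or_ge i.1 2 with hi1' | hi2
    · have : i = (⟨1, by omega⟩ : Fin n) := by ext; simp only [Fin.val_mk]; omega
      rw [this, hj]; exact T_y1y1
    · refine T_rel_mul _ hi2 _ ?_
      rw [hj, mul_comm]
      exact S3 _ (by omega)
  · -- j ≥ 2 : reduce right factor
    rw [mul_comm]
    refine T_rel_mul _ hj2 _ ?_
    rw [mul_comm]
    exact T_y_mul_pow i _ (by omega)

lemma T_mul_y {s : MvPolynomial (Fin n ⊕ Fin n) ℂ} (h : T n hn s) (j : Fin n) :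
    T n hn (s * X (Sum.inr j)) := by
  obtain ⟨Xf, hX⟩ := h
  refine T_congr (s' := ∑ i : Fin n, phi n (Xf i) * (X (Sum.inr i) * X (Sum.inr j))) ?_ ?_
  · have : (∑ i : Fin n, phi n (Xf i) * (X (Sum.inr i) * X (Sum.inr j)) :
        MvPolynomial (Fin n ⊕ Fin n) ℂ) = iota n Xf * X (Sum.inr j) := by
      rw [iota, Finset.sum_mul]
      exact Finset.sum_congr rfl fun i _ => by ring
    rw [this, map_mul, map_mul, hX]
  · exact T_sum _ _ fun i _ => T_smul _ (T_yy i j)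

lemma T_all (s : MvPolynomial (Fin n ⊕ Fin n) ℂ) : T n hn s := by
  induction s using MvPolynomial.induction_on with
  | C a =>
    have := T_smul (hn := hn) (C a) T_one
    simpa [phi_C] using this
  | add p q hp hq => exact T_add hp hq
  | mul_X p v ih =>
    cases v with
    | inl i =>
      have := T_smul (hn := hn) (X i) ih
      rw [phi_X] at this
      rwa [mul_comm]
    | inr j => exact T_mul_y ih j


variable (n hn)

noncomputable def rhoHat : Polynomial (MvPolynomial (Fin n) ℂ) :=
  Polynomial.C (X (⟨2, by omega⟩ : Fin n)) +
  ∑ k ∈ (Finset.Ico 2 (n - 1)).attach,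
    Polynomial.C (C ((k.1 : ℂ)) * X (⟨k.1 + 1, by
      have := Finset.mem_Ico.mp k.2; omega⟩ : Fin n)) * Polynomial.X ^ (k.1 - 1)

noncomputable def tauF : Fin n ⊕ Fin n → Polynomial (MvPolynomial (Fin n) ℂ) :=
  Sum.elim (fun i => Polynomial.C (X i))
    (fun j => if j.1 = 1 then rhoHat n hn else Polynomial.X ^ (j.1 - 1))

noncomputable def tau : MvPolynomial (Fin n ⊕ Fin n) ℂ →ₐ[ℂ]
    Polynomial (MvPolynomial (Fin n) ℂ) := aeval (tauF n hn)

noncomputable def sigmaF : Fin n ⊕ Fin n → Polynomial (MvPolynomial (Fin n) ℂ) :=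
  Sum.elim (fun i => Polynomial.C (X i))
    (fun j => if j.1 = 1 then Polynomial.C (X (⟨2, by omega⟩ : Fin n)) + Polynomial.X
      else if j.1 = 0 then 1 else 0)

noncomputable def sigma : MvPolynomial (Fin n ⊕ Fin n) ℂ →ₐ[ℂ]
    Polynomial (MvPolynomial (Fin n) ℂ) := aeval (sigmaF n hn)

lemma aeval_C_comp (p : MvPolynomial (Fin n) ℂ) :
    aeval (fun i => (Polynomial.C (X i) : Polynomial (MvPolynomial (Fin n) ℂ))) p
      = Polynomial.C p := by
  induction p using MvPolynomial.induction_on with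
  | C a => simp [Polynomial.algebraMap_apply, MvPolynomial.algebraMap_eq]
  | add p q hp hq => simp [hp, hq]
  | mul_X p i hp => simp [hp]

lemma tau_phi (p : MvPolynomial (Fin n) ℂ) : tau n hn (phi n p) = Polynomial.C p := by
  show aeval (tauF n hn) (rename Sum.inl p) = _
  rw [aeval_rename]
  exact aeval_C_comp n p

lemma sigma_phi (p : MvPolynomial (Fin n) ℂ) : sigma n hn (phi n p) = Polynomial.C p := by
  show aeval (sigmaF n hn) (rename Sum.inl p) = _
  rw [aeval_rename]
  exact aeval_C_comp n p

lemma tau_rho : tau n hn (rho2 n hn) = rhoHat n hn := by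
  rw [rho2, rhoHat, map_add, map_mul, map_sum]
  congr 1
  · simp [tau, tauF]
  · refine Finset.sum_congr rfl fun k _ => ?_
    have hk := Finset.mem_Ico.mp k.2
    rw [map_mul, map_mul]
    simp only [tau, aeval_X, aeval_C, tauF, Sum.elim_inl, Sum.elim_inr, Fin.val_mk]
    rw [if_neg (by omega)]
    rw [Polynomial.algebraMap_apply, MvPolynomial.algebraMap_eq, ← Polynomial.C_mul]

lemma sigma_rho : sigma n hn (rho2 n hn) = Polynomial.C (X (⟨2, by omega⟩ : Fin n)) := by
  rw [rho2, map_add, map_mul, map_sum]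
  have h1 : ∀ k ∈ (Finset.Ico 2 (n - 1)).attach,
      sigma n hn (C ((k.1 : ℂ)) *
        X (Sum.inl (⟨k.1 + 1, by have := Finset.mem_Ico.mp k.2; omega⟩ : Fin n)) *
        X (Sum.inr (⟨k.1, by have := Finset.mem_Ico.mp k.2; omega⟩ : Fin n))) = 0 := by
    intro k _
    have hk := Finset.mem_Ico.mp k.2
    rw [map_mul]
    have : sigma n hn (X (Sum.inr (⟨k.1, by omega⟩ : Fin n))) = 0 := by
      simp only [sigma, aeval_X, sigmaF, Sum.elim_inr, Fin.val_mk]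
      rw [if_neg (by omega), if_neg (by omega)]
    rw [this, mul_zero]
  rw [Finset.sum_congr rfl h1, Finset.sum_const_zero, add_zero]
  simp [sigma, sigmaF]

lemma tau_J : Jfam2 n hn ≤ Ideal.comap (tau n hn)
    (Ideal.span {(Polynomial.X : Polynomial (MvPolynomial (Fin n) ℂ)) ^ (n - 1)}) := by
  rw [Jfam2, Ideal.span_le]
  rintro x hx
  simp only [Set.mem_union, Set.mem_insert_iff, Set.mem_singleton_iff, Set.mem_range] at hx
  simp only [SetLike.mem_coe, Ideal.mem_comap]
  have hy1 : tau n hn (X (Sum.inr (⟨1, by omega⟩ : Fin n))) = rhoHat n hn := by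
    simp [tau, tauF]
  have hy0 : tau n hn (X (Sum.inr (⟨0, by omega⟩ : Fin n))) = 1 := by
    simp [tau, tauF]
  have hy2 : tau n hn (X (Sum.inr (⟨2, by omega⟩ : Fin n))) = Polynomial.X := by
    simp [tau, tauF]
  rcases hx with (rfl | rfl | rfl | rfl) | ⟨k, rfl⟩
  · rw [map_sub, map_one, hy0, sub_self]
    exact Ideal.zero_mem _
  · rw [map_pow, map_sub, hy1, tau_rho, sub_self]
    rw [zero_pow (by omega)]
    exact Ideal.zero_mem _
  · rw [map_mul, map_sub, hy1, tau_rho, sub_self, zero_mul]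
    exact Ideal.zero_mem _
  · rw [map_pow, hy2]
    exact Ideal.subset_span rfl
  · have hk := Finset.mem_Ico.mp k.2
    have h1 : tau n hn (X (Sum.inr (⟨k.1, hk.2⟩ : Fin n))) = Polynomial.X ^ (k.1 - 1) := by
      simp only [tau, aeval_X, tauF, Sum.elim_inr, Fin.val_mk]
      rw [if_neg (by omega)]
    rw [map_sub, map_pow, h1, hy2, sub_self]
    exact Ideal.zero_mem _

lemma sigma_J : Jfam2 n hn ≤ Ideal.comap (sigma n hn)
    (Ideal.span {(Polynomial.X : Polynomial (MvPolynomial (Fin n) ℂ)) ^ 2}) := by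
  rw [Jfam2, Ideal.span_le]
  rintro x hx
  simp only [Set.mem_union, Set.mem_insert_iff, Set.mem_singleton_iff, Set.mem_range] at hx
  simp only [SetLike.mem_coe, Ideal.mem_comap]
  have hy1 : sigma n hn (X (Sum.inr (⟨1, by omega⟩ : Fin n))) =
      Polynomial.C (X (⟨2, by omega⟩ : Fin n)) + Polynomial.X := by
    simp [sigma, sigmaF]
  have hy0 : sigma n hn (X (Sum.inr (⟨0, by omega⟩ : Fin n))) = 1 := by
    simp [sigma, sigmaF]
  have hy2 : sigma n hn (X (Sum.inr (⟨2, by omega⟩ : Fin n))) = 0 := by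
    simp only [sigma, aeval_X, sigmaF, Sum.elim_inr, Fin.val_mk]
    rw [if_neg (by omega), if_neg (by omega)]
  rcases hx with (rfl | rfl | rfl | rfl) | ⟨k, rfl⟩
  · rw [map_sub, map_one, hy0, sub_self]
    exact Ideal.zero_mem _
  · rw [map_pow, map_sub, hy1, sigma_rho, add_sub_cancel_left]
    exact Ideal.subset_span rfl
  · rw [map_mul, hy2, mul_zero]
    exact Ideal.zero_mem _
  · rw [map_pow, hy2, zero_pow (by omega)]
    exact Ideal.zero_mem _
  · have hk := Finset.mem_Ico.mp k.2
    have h1 : sigma n hn (X (Sum.inr (⟨k.1, hk.2⟩ : Fin n))) = 0 := by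
      simp only [sigma, aeval_X, sigmaF, Sum.elim_inr, Fin.val_mk]
      rw [if_neg (by omega), if_neg (by omega)]
    rw [map_sub, map_pow, h1, hy2, zero_pow (by omega), sub_self]
    exact Ideal.zero_mem _

lemma coeff_low {p : Polynomial (MvPolynomial (Fin n) ℂ)} {m j : ℕ}
    (hp : p ∈ Ideal.span {(Polynomial.X : Polynomial (MvPolynomial (Fin n) ℂ)) ^ m})
    (hj : j < m) : p.coeff j = 0 := by
  rw [Ideal.mem_span_singleton] at hp
  obtain ⟨q, rfl⟩ := hp
  rw [mul_comm, Polynomial.coeff_mul_X_pow']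
  simp [Nat.not_le.mpr hj]

lemma tau_iota (Zf : Fin n → MvPolynomial (Fin n) ℂ) :
    tau n hn (iota n Zf) = ∑ i : Fin n, Polynomial.C (Zf i) * tauF n hn (Sum.inr i) := by
  rw [iota, map_sum]
  exact Finset.sum_congr rfl fun i _ => by rw [map_mul, tau_phi]; simp [tau]

lemma sigma_iota (Zf : Fin n → MvPolynomial (Fin n) ℂ) :
    sigma n hn (iota n Zf) = ∑ i : Fin n, Polynomial.C (Zf i) * sigmaF n hn (Sum.inr i) := by
  rw [iota, map_sum]
  exact Finset.sum_congr rfl fun i _ => by rw [map_mul, sigma_phi]; simp [sigma]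


lemma iota_mem_zero {Zf : Fin n → MvPolynomial (Fin n) ℂ}
    (hZ : iota n Zf ∈ Jfam2 n hn) : Zf = 0 := by
  have hσ : sigma n hn (iota n Zf) ∈
      Ideal.span {(Polynomial.X : Polynomial (MvPolynomial (Fin n) ℂ)) ^ 2} :=
    sigma_J n hn hZ
  have hτ : tau n hn (iota n Zf) ∈
      Ideal.span {(Polynomial.X : Polynomial (MvPolynomial (Fin n) ℂ)) ^ (n - 1)} :=
    tau_J n hn hZ
  have h1 : Zf (⟨1, by omega⟩ : Fin n) = 0 := by
    have hc : (sigma n hn (iota n Zf)).coeff 1 = 0 := coeff_low n hσ (by omega)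
    rw [sigma_iota, Polynomial.finset_sum_coeff,
      Finset.sum_eq_single (⟨1, by omega⟩ : Fin n)] at hc
    · simpa [sigmaF, Polynomial.coeff_C] using hc
    · intro b _ hb
      have hb1 : b.1 ≠ 1 := fun h => hb (Fin.ext (by simpa using h))
      simp only [sigmaF, Sum.elim_inr, if_neg hb1]
      by_cases hb0 : b.1 = 0
      · simp [hb0, Polynomial.coeff_C]
      · simp [hb0]
    · intro h; exact absurd (Finset.mem_univ _) h
  funext i
  by_cases hi1 : i.1 = 1
  · have : i = (⟨1, by omega⟩ : Fin n) := by ext; simp only [Fin.val_mk]; omega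
    rw [this]; exact h1
  · have hc : (tau n hn (iota n Zf)).coeff (i.1 - 1) = 0 :=
      coeff_low n hτ (by have := i.2; omega)
    rw [tau_iota, Polynomial.finset_sum_coeff, Finset.sum_eq_single i] at hc
    · simp only [tauF, Sum.elim_inr, if_neg hi1, Polynomial.coeff_C_mul,
        Polynomial.coeff_X_pow, if_pos rfl, mul_one] at hc
      simpa using hc
    · intro b _ hb
      by_cases hb1 : b.1 = 1
      · have : b = (⟨1, by omega⟩ : Fin n) := by ext; simp only [Fin.val_mk]; omega
        rw [this, h1]
        simp
      · have hbv : b.1 ≠ i.1 := fun h => hb (Fin.ext h)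
        simp only [tauF, Sum.elim_inr, if_neg hb1, Polynomial.coeff_C_mul,
          Polynomial.coeff_X_pow]
        rw [if_neg (by omega), mul_zero]
    · intro h; exact absurd (Finset.mem_univ _) h

end S16


/-- Second family (2.5.3): the spectral cover is flat of degree `n`: the map
`X ↦ ι(X) mod J` from vector fields to `S/J` is an `R`-module isomorphism
(where `S/J` is an `R`-module via `φ` followed by the projection). -/
theorem stmt_16 (n : ℕ) (hn : 3 ≤ n) :
    Function.Bijective (fun Xf : Fin n → MvPolynomial (Fin n) ℂ =>
      Ideal.Quotient.mk (Jfam2 n hn) (iota n Xf)) ∧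
    (∀ Xf Yf : Fin n → MvPolynomial (Fin n) ℂ,
      Ideal.Quotient.mk (Jfam2 n hn) (iota n (Xf + Yf)) =
        Ideal.Quotient.mk (Jfam2 n hn) (iota n Xf) +
        Ideal.Quotient.mk (Jfam2 n hn) (iota n Yf)) ∧
    (∀ (r : MvPolynomial (Fin n) ℂ) (Xf : Fin n → MvPolynomial (Fin n) ℂ),
      Ideal.Quotient.mk (Jfam2 n hn) (iota n (r • Xf)) =
        Ideal.Quotient.mk (Jfam2 n hn) (phi n r) *
        Ideal.Quotient.mk (Jfam2 n hn) (iota n Xf)) := by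
  refine ⟨⟨?_, ?_⟩, ?_, ?_⟩
  · intro a b hab
    have hmem : iota n (a - b) ∈ Jfam2 n hn := by
      rw [S16.iota_sub]
      exact (Ideal.Quotient.eq).mp hab
    have := S16.iota_mem_zero n hn hmem
    exact sub_eq_zero.mp (by simpa [sub_eq_zero] using this)
  · intro q
    obtain ⟨s, rfl⟩ := Ideal.Quotient.mk_surjective q
    obtain ⟨Xf, hXf⟩ := S16.T_all (n := n) (hn := hn) s
    exact ⟨Xf, hXf.symm⟩
  · intro Xf Yf
    rw [S16.iota_add, map_add]
  · intro r Xf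
    rw [S16.iota_smul, map_mul]
end
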